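/- arXiv:1204.4052 — 8 statements merged into one kernel-verified Lean document; each statement's English description precedes it below -/
import Mathlib

section
/- Let H be a complex Hilbert space and let E be a two-sided ideal of the algebra B(H) of bounded linear operators on H such that every element of E is a compact operator, and suppose E is equipped with a norm ‖·‖_E under which E is a Banach space and which satisfies ‖a x b‖_E ≤ ‖a‖ ‖x‖_E ‖b‖ for all x ∈ E and all a, b ∈ B(H) (operator norms on a, b). Then every derivation δ : E → E is continuous with respect to the norm ‖·‖_E. -/
open scoped ComplexConjugate
open Filter Topology

/-- Let `H` be a complex Hilbert space and let `E` be a two-sided ideal of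
`B(H)` consisting of compact operators (encoded as a normed space `E` together with an
injective linear embedding `ι : E →ₗ B(H)` whose range is a two-sided ideal), equipped with a
Banach norm satisfying `‖a x b‖_E ≤ ‖a‖ ‖x‖_E ‖b‖`.  Then every derivation `δ : E → E`
is continuous with respect to `‖·‖_E`. -/
theorem derivation_on_banach_ideal_of_compacts_continuous
    {H : Type*} [NormedAddCommGroup H] [InnerProductSpace ℂ H] [CompleteSpace H]
    (E : Type*) [NormedAddCommGroup E] [NormedSpace ℂ E] [CompleteSpace E]
    (ι : E →ₗ[ℂ] (H →L[ℂ] H)) (hinj : Function.Injective ι)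
    (hcompact : ∀ x : E, IsCompactOperator (ι x))
    (hideal : ∀ (a b : H →L[ℂ] H) (x : E),
      ∃ y : E, ι y = a * ι x * b ∧ ‖y‖ ≤ ‖a‖ * ‖x‖ * ‖b‖)
    (δ : E →ₗ[ℂ] E)
    (hleib : ∀ x y z : E, ι z = ι x * ι y →
      ι (δ z) = ι (δ x) * ι y + ι x * ι (δ y)) :
    Continuous δ := by
  classical
  by_cases htriv : ∀ x : E, x = 0
  · have hδ : (δ : E → E) = fun _ => (0 : E) := funext fun x => htriv _
    rw [show (⇑δ : E → E) = fun _ => (0 : E) from hδ]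
    exact continuous_const
  push_neg at htriv
  obtain ⟨x₀, hx₀⟩ := htriv
  -- rank one operators
  set θ : H → H → (H →L[ℂ] H) := fun ξ η => (innerSL ℂ η).smulRight ξ with hθdef
  have θ_apply : ∀ ξ η v : H, θ ξ η v = (inner ℂ η v : ℂ) • ξ := fun _ _ _ => rfl
  have θ_norm : ∀ ξ η : H, ‖θ ξ η‖ = ‖η‖ * ‖ξ‖ := by
    intro ξ η
    rw [hθdef]
    rw [ContinuousLinearMap.norm_smulRight_apply, innerSL_apply_norm]
  -- a nonzero vector in the range of ι x₀
  have hιx₀ : ι x₀ ≠ 0 := fun h => hx₀ (hinj (h.trans (map_zero ι).symm))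
  have hζ : ∃ ζ : H, ι x₀ ζ ≠ 0 := by
    by_contra h
    push_neg at h
    exact hιx₀ (ContinuousLinearMap.ext h)
  obtain ⟨ζ, hw⟩ := hζ
  set w : H := ι x₀ ζ with hwdef
  -- every rank one operator is in the range of ι
  have hrank : ∀ ξ η : H, ∃ t : E, ι t = θ ξ η := by
    intro ξ η
    obtain ⟨t, ht, -⟩ := hideal ((((‖w‖ : ℂ)) ^ 2)⁻¹ • θ ξ w) (θ ζ η) x₀
    refine ⟨t, ?_⟩
    rw [ht]
    ext v
    simp only [ContinuousLinearMap.mul_apply, ContinuousLinearMap.smul_apply, θ_apply,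
      map_smul, inner_smul_right, ← hwdef, smul_smul]
    rw [inner_self_eq_norm_sq_to_K]
    have hw2 : ((‖w‖ : ℂ)) ^ 2 ≠ 0 := by
      simp [pow_eq_zero_iff, Complex.ofReal_eq_zero, norm_eq_zero, hw]
    field_simp
    exact congrArg (· • ξ) (mul_div_cancel_right₀ _ hw2)
  -- fixed rank-one projection
  obtain ⟨t₀, ht₀⟩ := hrank ((‖w‖ : ℂ)⁻¹ • w) ((‖w‖ : ℂ)⁻¹ • w)
  have hξ₀ : ‖(‖w‖ : ℂ)⁻¹ • w‖ = 1 := by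
    rw [norm_smul]
    simp [norm_eq_zero, hw]
  have ht₀ne : t₀ ≠ 0 := by
    intro h
    have h2 : θ ((‖w‖ : ℂ)⁻¹ • w) ((‖w‖ : ℂ)⁻¹ • w) = 0 := by
      rw [← ht₀, h, map_zero]
    have h3 := congrArg (fun T : H →L[ℂ] H => T ((‖w‖ : ℂ)⁻¹ • w)) h2
    simp only [θ_apply, ContinuousLinearMap.zero_apply] at h3
    rw [inner_self_eq_norm_sq_to_K, hξ₀] at h3
    norm_num at h3
    exact hw h3
  set c₀ : ℝ := ‖t₀‖ with hc₀def
  have hc₀ : 0 < c₀ := norm_pos_iff.2 ht₀ne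
  -- key bound on matrix entries
  have hbound : ∀ (x : E) (ξ η : H), ‖(inner ℂ ξ (ι x η) : ℂ)‖ * c₀ ≤ ‖ξ‖ * ‖η‖ * ‖x‖ := by
    intro x ξ η
    set ξ₀ : H := (‖w‖ : ℂ)⁻¹ • w
    obtain ⟨y, hy, hyn⟩ := hideal (θ ξ₀ ξ) (θ η ξ₀) x
    have hyval : ι y = ι ((inner ℂ ξ (ι x η) : ℂ) • t₀) := by
      rw [map_smul, ht₀, hy]
      ext v
      simp only [ContinuousLinearMap.mul_apply, θ_apply, map_smul, inner_smul_right,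
        ContinuousLinearMap.smul_apply, smul_smul]
      ring_nf
    have hy2 : y = (inner ℂ ξ (ι x η) : ℂ) • t₀ := hinj hyval
    have hyn2 : ‖y‖ = ‖(inner ℂ ξ (ι x η) : ℂ)‖ * c₀ := by
      rw [hy2, norm_smul, hc₀def]
    rw [hyn2] at hyn
    calc ‖(inner ℂ ξ (ι x η) : ℂ)‖ * c₀ ≤ ‖θ ξ₀ ξ‖ * ‖x‖ * ‖θ η ξ₀‖ := hyn
      _ = ‖ξ‖ * ‖η‖ * ‖x‖ := by rw [θ_norm, θ_norm, hξ₀]; ring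
  -- operator-norm bound on ι
  have hιb : ∀ x : E, ‖ι x‖ ≤ c₀⁻¹ * ‖x‖ := by
    intro x
    refine ContinuousLinearMap.opNorm_le_bound _ (by positivity) fun v => ?_
    by_cases h : ι x v = 0
    · rw [h, norm_zero]; positivity
    · have h1 : ‖ι x v‖ * ‖ι x v‖ = ‖(inner ℂ (ι x v) (ι x v) : ℂ)‖ := by
        rw [inner_self_eq_norm_sq_to_K, norm_pow, RCLike.norm_ofReal, abs_norm, sq]
      have h2 := hbound x (ι x v) v
      rw [← h1] at h2
      have h3 : 0 < ‖ι x v‖ := norm_pos_iff.2 h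
      have h4 : ‖ι x v‖ * ‖ι x v‖ ≤ ‖ι x v‖ * ‖v‖ * ‖x‖ * c₀⁻¹ := by
        rw [← le_div_iff₀ hc₀] at h2
        calc ‖ι x v‖ * ‖ι x v‖ ≤ ‖ι x v‖ * ‖v‖ * ‖x‖ / c₀ := h2
          _ = ‖ι x v‖ * ‖v‖ * ‖x‖ * c₀⁻¹ := by rw [div_eq_mul_inv]
      have := le_of_mul_le_mul_left (by linarith [h4] : ‖ι x v‖ * ‖ι x v‖ ≤ ‖ι x v‖ * (‖v‖ * ‖x‖ * c₀⁻¹)) h3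
      calc ‖ι x v‖ ≤ ‖v‖ * ‖x‖ * c₀⁻¹ := this
        _ = c₀⁻¹ * ‖x‖ * ‖v‖ := by ring
  have hι_cont : Continuous (⇑ι) := AddMonoidHomClass.continuous_of_bound ι c₀⁻¹ hιb
  -- operator identity for compression by rank ones
  have hPTQ : ∀ (ξ η : H) (T : H →L[ℂ] H),
      θ ξ ξ * T * θ η η = (inner ℂ ξ (T η) : ℂ) • θ ξ η := by
    intro ξ η T
    ext u
    simp only [ContinuousLinearMap.mul_apply, θ_apply, map_smul, inner_smul_right,
      ContinuousLinearMap.smul_apply, smul_smul]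
    rw [mul_comm]
  -- core claim for the closed graph theorem
  have key : ∀ (v : ℕ → E) (y : E), Tendsto v atTop (𝓝 0) →
      Tendsto (fun n => δ (v n)) atTop (𝓝 y) → y = 0 := by
    intro v y hv hδv
    have hιv : Tendsto (fun n => ι (v n)) atTop (𝓝 0) := by
      have := (hι_cont.tendsto 0).comp hv
      simpa [Function.comp_def, map_zero] using this
    have hιδv : Tendsto (fun n => ι (δ (v n))) atTop (𝓝 (ι y)) :=
      (hι_cont.tendsto y).comp hδv
    have hunit : ∀ ξ η : H, ‖ξ‖ = 1 → ‖η‖ = 1 → (inner ℂ ξ (ι y η) : ℂ) = 0 := by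
      intro ξ η hξ hη
      obtain ⟨p, hp⟩ := hrank ξ ξ
      obtain ⟨q, hq⟩ := hrank η η
      obtain ⟨t, ht⟩ := hrank ξ η
      -- the Leibniz identity, applied twice
      have hEq : ∀ n : ℕ, ((inner ℂ ξ (ι (v n) η) : ℂ)) • ι (δ t)
          = ι (δ p) * ι (v n) * θ η η + θ ξ ξ * ι (δ (v n)) * θ η η
            + θ ξ ξ * ι (v n) * ι (δ q) := by
        intro n
        obtain ⟨z', hz', -⟩ := hideal (θ ξ ξ) 1 (v n)
        have hz'2 : ι z' = ι p * ι (v n) := by rw [hz', hp, mul_one]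
        have L1 := hleib p (v n) z' hz'2
        have hzval : ι ((inner ℂ ξ (ι (v n) η) : ℂ) • t) = ι z' * ι q := by
          rw [map_smul, ht, hz'2, hp, hq, hPTQ]
        have L2 := hleib z' q _ hzval
        rw [map_smul, map_smul, L1, hz'2, hp, hq] at L2
        rw [L2, add_mul, mul_assoc, mul_assoc, ← mul_assoc]
      -- pass to the limit
      have hlam : Tendsto (fun n => (inner ℂ ξ (ι (v n) η) : ℂ)) atTop (𝓝 0) := by
        have hcont : Continuous fun T : H →L[ℂ] H => (inner ℂ ξ (T η) : ℂ) :=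
          (innerSL ℂ ξ).continuous.comp (ContinuousLinearMap.apply ℂ H η).continuous
        have := (hcont.tendsto 0).comp hιv
        simpa [Function.comp_def] using this
      have hA : Tendsto (fun n => ((inner ℂ ξ (ι (v n) η) : ℂ)) • ι (δ t)) atTop
          (𝓝 (0 : H →L[ℂ] H)) := by
        have := hlam.smul_const (ι (δ t))
        simpa using this
      have hB : Tendsto (fun n => ι (δ p) * ι (v n) * θ η η) atTop (𝓝 (0 : H →L[ℂ] H)) := by
        have := ((tendsto_const_nhds : Tendsto (fun _ : ℕ => ι (δ p)) atTop
          (𝓝 (ι (δ p)))).mul hιv).mul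
          (tendsto_const_nhds : Tendsto (fun _ : ℕ => θ η η) atTop (𝓝 (θ η η)))
        simpa using this
      have hC : Tendsto (fun n => θ ξ ξ * ι (δ (v n)) * θ η η) atTop
          (𝓝 (θ ξ ξ * ι y * θ η η)) :=
        (((tendsto_const_nhds : Tendsto (fun _ : ℕ => θ ξ ξ) atTop
          (𝓝 (θ ξ ξ))).mul hιδv).mul
          (tendsto_const_nhds : Tendsto (fun _ : ℕ => θ η η) atTop (𝓝 (θ η η))))
      have hD : Tendsto (fun n => θ ξ ξ * ι (v n) * ι (δ q)) atTop
          (𝓝 (0 : H →L[ℂ] H)) := by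
        have := ((tendsto_const_nhds : Tendsto (fun _ : ℕ => θ ξ ξ) atTop
          (𝓝 (θ ξ ξ))).mul hιv).mul
          (tendsto_const_nhds : Tendsto (fun _ : ℕ => ι (δ q)) atTop (𝓝 (ι (δ q))))
        simpa using this
      have hRHS : Tendsto (fun n => ι (δ p) * ι (v n) * θ η η + θ ξ ξ * ι (δ (v n)) * θ η η
          + θ ξ ξ * ι (v n) * ι (δ q)) atTop (𝓝 (θ ξ ξ * ι y * θ η η)) := by
        have := (hB.add hC).add hD
        simpa using this
      have hA' : Tendsto (fun n => ι (δ p) * ι (v n) * θ η η + θ ξ ξ * ι (δ (v n)) * θ η η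
          + θ ξ ξ * ι (v n) * ι (δ q)) atTop (𝓝 (0 : H →L[ℂ] H)) := by
        have heq : (fun n => ((inner ℂ ξ (ι (v n) η) : ℂ)) • ι (δ t))
            = fun n => ι (δ p) * ι (v n) * θ η η + θ ξ ξ * ι (δ (v n)) * θ η η
              + θ ξ ξ * ι (v n) * ι (δ q) := funext hEq
        rw [← heq]
        exact hA
      have hPQ : θ ξ ξ * ι y * θ η η = 0 := tendsto_nhds_unique hRHS hA'
      -- extract the matrix entry
      have h1 : ((inner ℂ ξ (ι y η) : ℂ)) • θ ξ η = 0 := by rw [← hPTQ ξ η (ι y), hPQ]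
      have h2 := congrArg (fun T : H →L[ℂ] H => T η) h1
      simp only [ContinuousLinearMap.smul_apply, θ_apply, ContinuousLinearMap.zero_apply,
        smul_smul] at h2
      rw [inner_self_eq_norm_sq_to_K, hη] at h2
      have hξne : ξ ≠ 0 := by
        intro h
        rw [h, norm_zero] at hξ
        exact one_ne_zero hξ.symm
      rcases smul_eq_zero.mp h2 with h3 | h3
      · simpa using h3
      · exact absurd h3 hξne
    -- conclude ι y = 0
    have hιy : ι y = 0 := by
      ext η
      simp only [ContinuousLinearMap.zero_apply]
      by_cases hη : η = 0
      · simp [hη]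
      by_contra hne
      have hη'n : ‖(‖η‖ : ℂ)⁻¹ • η‖ = 1 := by
        rw [norm_smul]
        simp [norm_eq_zero, hη]
      have hu0 : ι y ((‖η‖ : ℂ)⁻¹ • η) ≠ 0 := by
        rw [map_smul]
        simp only [ne_eq, smul_eq_zero, inv_eq_zero, Complex.ofReal_eq_zero, norm_eq_zero]
        push_neg
        exact ⟨hη, hne⟩
      set u : H := ι y ((‖η‖ : ℂ)⁻¹ • η) with hudef
      have hun : ‖(‖u‖ : ℂ)⁻¹ • u‖ = 1 := by
        rw [norm_smul]
        simp [norm_eq_zero, hu0]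
      have h0 := hunit ((‖u‖ : ℂ)⁻¹ • u) ((‖η‖ : ℂ)⁻¹ • η) hun hη'n
      rw [← hudef, inner_smul_left] at h0
      rcases mul_eq_zero.mp h0 with h3 | h3
      · simp only [map_inv₀, Complex.conj_ofReal, inv_eq_zero, Complex.ofReal_eq_zero,
          norm_eq_zero] at h3
        exact hu0 h3
      · exact hu0 (inner_self_eq_zero.mp h3)
    exact hinj (hιy.trans (map_zero ι).symm)
  -- closed graph theorem
  apply LinearMap.continuous_of_seq_closed_graph
  intro u x y hu hy
  have hv : Tendsto (fun n => u n - x) atTop (𝓝 0) := by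
    simpa using hu.sub (tendsto_const_nhds : Tendsto (fun _ : ℕ => x) atTop (𝓝 x))
  have hδv : Tendsto (fun n => δ (u n - x)) atTop (𝓝 (y - δ x)) := by
    have := hy.sub (tendsto_const_nhds : Tendsto (fun _ : ℕ => δ x) atTop (𝓝 (δ x)))
    simpa [map_sub, Function.comp] using this
  have h := key (fun n => u n - x) (y - δ x) hv hδv
  exact sub_eq_zero.mp h
end

section
/- Let H be a complex Hilbert space and let E be a two-sided ideal of B(H) consisting of compact operators, equipped with a norm ‖·‖_E under which E is a Banach space and which satisfies ‖a x b‖_E ≤ ‖a‖ ‖x‖_E ‖b‖ for all x ∈ E and a, b ∈ B(H). Then every derivation δ : B(H) → E (linear with δ(xy) = δ(x)y + xδ(y) for x, y ∈ B(H)) is continuous as a map from (B(H), operator norm) to (E, ‖·‖_E). -/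
open Filter Topology

local notation "⟪" x ", " y "⟫" => @inner ℂ _ _ x y

private lemma chernoff {H : Type*} [NormedAddCommGroup H] [InnerProductSpace ℂ H]
    [CompleteSpace H] (e : H) (he : ‖e‖ = 1)
    (D : (H →L[ℂ] H) →ₗ[ℂ] (H →L[ℂ] H))
    (hD : ∀ x y, D (x * y) = D x * y + x * D y) :
    ∃ T : H →L[ℂ] H, ∀ x, D x = T * x - x * T := by
  have hee : (⟪e, e⟫ : ℂ) = 1 := by
    rw [inner_self_eq_norm_sq_to_K, he]; norm_num
  -- rank-one operators h ↦ ⟪e, h⟫ • ξ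
  let r : H → (H →L[ℂ] H) := fun ξ => (innerSL ℂ e).smulRight ξ
  have hr_apply : ∀ ξ h, r ξ h = ⟪e, h⟫ • ξ := fun ξ h => rfl
  have hre : ∀ ξ, r ξ e = ξ := by
    intro ξ; rw [hr_apply, hee, one_smul]
  have hxr : ∀ (x : H →L[ℂ] H) ξ, x * r ξ = r (x ξ) := by
    intro x ξ; ext h
    simp only [ContinuousLinearMap.mul_apply, hr_apply, map_smul]
  have hr_add : ∀ ξ₁ ξ₂, r (ξ₁ + ξ₂) = r ξ₁ + r ξ₂ := by
    intro ξ₁ ξ₂; ext h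
    simp only [ContinuousLinearMap.add_apply, hr_apply, smul_add]
  have hr_smul : ∀ (c : ℂ) ξ, r (c • ξ) = c • r ξ := by
    intro c ξ; ext h
    simp only [ContinuousLinearMap.smul_apply, hr_apply, smul_comm c]
  -- the implementing linear map
  let Tl : H →ₗ[ℂ] H :=
    { toFun := fun ξ => D (r ξ) e
      map_add' := by
        intro a b
        show D (r (a + b)) e = D (r a) e + D (r b) e
        rw [hr_add, map_add, ContinuousLinearMap.add_apply]
      map_smul' := by
        intro c a
        show D (r (c • a)) e = c • D (r a) e
        rw [hr_smul, map_smul, ContinuousLinearMap.smul_apply] }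
  have hTl : ∀ ξ, Tl ξ = D (r ξ) e := fun _ => rfl
  -- key identity
  have hkey : ∀ (x : H →L[ℂ] H) ξ, Tl (x ξ) = D x ξ + x (Tl ξ) := by
    intro x ξ
    have h := congrArg (fun A : H →L[ℂ] H => A e) (hD x (r ξ))
    simp only [ContinuousLinearMap.add_apply, ContinuousLinearMap.mul_apply] at h
    rw [hxr, hre] at h
    simpa [hTl] using h
  -- weak continuity
  have hweak : ∀ η : H, Continuous fun ξ => (⟪η, Tl ξ⟫ : ℂ) := by
    intro η
    set x : H →L[ℂ] H := (innerSL ℂ η).smulRight e with hx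
    have hx_apply : ∀ h, x h = ⟪η, h⟫ • e := fun h => rfl
    have h2 : ∀ ξ, (⟪η, Tl ξ⟫ : ℂ) = ⟪η, ξ⟫ * ⟪e, Tl e⟫ - ⟪e, D x ξ⟫ := by
      intro ξ
      have h := hkey x ξ
      rw [hx_apply ξ] at h
      rw [map_smul] at h
      have h' := congrArg (fun v => (⟪e, v⟫ : ℂ)) h
      simp only [inner_add_right, inner_smul_right, hee, mul_one] at h'
      have hxT : (⟪e, x (Tl ξ)⟫ : ℂ) = ⟪η, Tl ξ⟫ := by
        rw [hx_apply, inner_smul_right, hee, mul_one]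
      rw [hxT] at h'
      linear_combination -h'
    have hc : Continuous fun ξ : H => (⟪η, ξ⟫ : ℂ) * ⟪e, Tl e⟫ - ⟪e, D x ξ⟫ := by
      exact ((innerSL ℂ η).continuous.mul continuous_const).sub
        ((innerSL ℂ e).continuous.comp (D x).continuous)
    exact hc.congr fun ξ => (h2 ξ).symm
  -- closed graph
  have hTc : Continuous Tl := by
    apply Tl.continuous_of_seq_closed_graph
    intro u x y hu hy
    refine ext_inner_left ℂ fun v => ?_
    have h1 : Tendsto (fun n => (⟪v, Tl (u n)⟫ : ℂ)) atTop (𝓝 ⟪v, y⟫) :=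
      ((innerSL ℂ v).continuous.tendsto y).comp hy
    have h2 : Tendsto (fun n => (⟪v, Tl (u n)⟫ : ℂ)) atTop (𝓝 ⟪v, Tl x⟫) :=
      ((hweak v).tendsto x).comp hu
    exact tendsto_nhds_unique h1 h2
  refine ⟨⟨Tl, hTc⟩, fun x => ?_⟩
  ext ξ
  have h := hkey x ξ
  simp only [ContinuousLinearMap.sub_apply, ContinuousLinearMap.mul_apply,
    ContinuousLinearMap.coe_mk']
  rw [h]; abel

/-- Let `H` be a complex Hilbert space and `E` a two-sided ideal of `B(H)`
consisting of compact operators (encoded via an injective linear embedding `ι`), with a Banach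
norm satisfying the bimodule inequality `‖a x b‖_E ≤ ‖a‖ ‖x‖_E ‖b‖`.  Then every derivation
`δ : B(H) → E` is continuous from the operator norm to `‖·‖_E`. -/
theorem derivation_into_banach_ideal_of_compacts_continuous
    {H : Type*} [NormedAddCommGroup H] [InnerProductSpace ℂ H] [CompleteSpace H]
    (E : Type*) [NormedAddCommGroup E] [NormedSpace ℂ E] [CompleteSpace E]
    (ι : E →ₗ[ℂ] (H →L[ℂ] H)) (hinj : Function.Injective ι)
    (hcompact : ∀ x : E, IsCompactOperator (ι x))
    (hideal : ∀ (a b : H →L[ℂ] H) (x : E),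
      ∃ y : E, ι y = a * ι x * b ∧ ‖y‖ ≤ ‖a‖ * ‖x‖ * ‖b‖)
    (δ : (H →L[ℂ] H) →ₗ[ℂ] E)
    (hleib : ∀ x y : H →L[ℂ] H,
      ι (δ (x * y)) = ι (δ x) * y + x * ι (δ y)) :
    Continuous δ := by
  rcases subsingleton_or_nontrivial E with hE | hE
  · have h0 : (⇑δ : (H →L[ℂ] H) → E) = fun _ => 0 := funext fun x => Subsingleton.elim _ _
    rw [h0]; exact continuous_const
  -- a nonzero element of E
  obtain ⟨x0, hx0⟩ := exists_ne (0 : E)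
  have hιx0 : ι x0 ≠ 0 := fun h => hx0 (hinj (h.trans (map_zero ι).symm))
  have he0' : ∃ e0, ι x0 e0 ≠ 0 := by
    by_contra h
    push_neg at h
    exact hιx0 (ContinuousLinearMap.ext fun v => by simp [h v])
  obtain ⟨e0, he0⟩ := he0'
  set f0 : H := ι x0 e0 with hf0def
  have hf0 : ‖f0‖ ≠ 0 := norm_ne_zero_iff.2 he0
  have hf0pos : (0:ℝ) < ‖f0‖ := norm_pos_iff.2 he0
  -- a unit vector
  let e : H := ‖f0‖⁻¹ • f0
  have he : ‖e‖ = 1 := by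
    rw [norm_smul, norm_inv, norm_norm, inv_mul_cancel₀ hf0]
  -- implement the derivation spatially
  obtain ⟨T, hT⟩ := chernoff e he (ι ∘ₗ δ)
    (fun x y => by simp only [LinearMap.comp_apply]; exact hleib x y)
  have hTδ : ∀ x, ι (δ x) = T * x - x * T := fun x => hT x
  -- the coordinate functionals on E are continuous
  have hfun : ∀ ξ η : H, Continuous fun x : E => (⟪η, ι x ξ⟫ : ℂ) := by
    intro ξ η
    by_cases hξ : ξ = 0
    · simp only [hξ, map_zero, inner_zero_right]
      exact continuous_const
    by_cases hη : η = 0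
    · simp only [hη, inner_zero_left]
      exact continuous_const
    -- the fixed rank-one operator R : h ↦ ⟪ξ, h⟫ • η
    set R : H →L[ℂ] H := (innerSL ℂ ξ).smulRight η with hRdef
    have hR_apply : ∀ h, R h = ⟪ξ, h⟫ • η := fun h => rfl
    have hR : R ≠ 0 := by
      intro h
      have := congrArg (fun A : H →L[ℂ] H => A ξ) h
      simp only [hR_apply, ContinuousLinearMap.zero_apply, smul_eq_zero,
        inner_self_eq_zero] at this
      tauto
    -- get w ∈ E with ι w = ⟪f0,f0⟫ • R
    set κ : ℂ := ⟪f0, f0⟫ with hκdef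
    have hκ : κ ≠ 0 := fun h => he0 (inner_self_eq_zero.mp h)
    have hκpos : (0:ℝ) < ‖κ‖ := norm_pos_iff.2 hκ
    set a1 : H →L[ℂ] H := (innerSL ℂ f0).smulRight η with ha1def
    set b1 : H →L[ℂ] H := (innerSL ℂ ξ).smulRight e0 with hb1def
    have hab1 : a1 * ι x0 * b1 = κ • R := by
      ext h
      simp only [ContinuousLinearMap.mul_apply, ContinuousLinearMap.smul_apply,
        ContinuousLinearMap.smulRight_apply, innerSL_apply_apply, map_smul, hR_apply,
        ha1def, hb1def, inner_smul_right, ← hf0def, hκdef, smul_smul]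
      congr 1
      ring
    obtain ⟨w, hw, -⟩ := hideal a1 b1 x0
    rw [hab1] at hw
    have hw0 : w ≠ 0 := by
      intro h
      rw [h, map_zero] at hw
      rcases (smul_eq_zero.mp hw.symm) with h2 | h2
      · exact hκ h2
      · exact hR h2
    have hwpos : (0:ℝ) < ‖w‖ := norm_pos_iff.2 hw0
    -- the coordinate functional, bounded
    set a2 : H →L[ℂ] H := (innerSL ℂ η).smulRight η with ha2def
    set b2 : H →L[ℂ] H := (innerSL ℂ ξ).smulRight ξ with hb2def
    have hab2 : ∀ x : E, a2 * ι x * b2 = (⟪η, ι x ξ⟫ : ℂ) • R := by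
      intro x
      ext h
      simp only [ContinuousLinearMap.mul_apply, ContinuousLinearMap.smul_apply,
        ContinuousLinearMap.smulRight_apply, innerSL_apply_apply, map_smul, hR_apply,
        ha2def, hb2def, inner_smul_right, smul_smul]
      congr 1
      ring
    set C : ℝ := ‖κ‖ * (‖η‖ * ‖η‖) * (‖ξ‖ * ‖ξ‖) / ‖w‖ with hCdef
    have hbd : ∀ x : E, ‖(⟪η, ι x ξ⟫ : ℂ)‖ ≤ C * ‖x‖ := by
      intro x
      obtain ⟨z, hz, hzb⟩ := hideal a2 b2 x
      have hzw : z = ((⟪η, ι x ξ⟫ : ℂ) / κ) • w := by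
        apply hinj
        rw [map_smul, hw, hz, hab2, smul_smul, div_mul_cancel₀ _ hκ]
      have hnz : ‖z‖ = ‖(⟪η, ι x ξ⟫ : ℂ)‖ / ‖κ‖ * ‖w‖ := by
        rw [hzw, norm_smul, norm_div]
      have ha2n : ‖a2‖ ≤ ‖η‖ * ‖η‖ := by
        rw [ha2def, ContinuousLinearMap.norm_smulRight_apply, innerSL_apply_norm]
      have hb2n : ‖b2‖ ≤ ‖ξ‖ * ‖ξ‖ := by
        rw [hb2def, ContinuousLinearMap.norm_smulRight_apply, innerSL_apply_norm]
      have hkey : ‖(⟪η, ι x ξ⟫ : ℂ)‖ / ‖κ‖ * ‖w‖ ≤ (‖η‖ * ‖η‖) * ‖x‖ * (‖ξ‖ * ‖ξ‖) := by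
        rw [← hnz]
        calc ‖z‖ ≤ ‖a2‖ * ‖x‖ * ‖b2‖ := hzb
          _ ≤ (‖η‖ * ‖η‖) * ‖x‖ * (‖ξ‖ * ‖ξ‖) := by gcongr
      rw [hCdef, div_mul_eq_mul_div, le_div_iff₀ hwpos]
      rw [div_mul_eq_mul_div, div_le_iff₀ hκpos] at hkey
      nlinarith [norm_nonneg x]
    -- build the continuous linear functional
    let ψ : E →ₗ[ℂ] ℂ :=
      { toFun := fun x => ⟪η, ι x ξ⟫
        map_add' := by intro a b; simp [inner_add_right]
        map_smul' := by intro c a; simp [inner_smul_right] }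
    exact (ψ.mkContinuous C hbd).continuous
  -- closed graph theorem for δ
  apply δ.continuous_of_seq_closed_graph
  intro u x y hu hy
  have hsub : ι (y - δ x) = 0 := by
    apply ContinuousLinearMap.ext
    intro ξ
    rw [ContinuousLinearMap.zero_apply]
    refine ext_inner_left ℂ fun η => ?_
    rw [inner_zero_right]
    -- δ (u n - x) → y - δ x in E
    have hδ : Tendsto (fun n => δ (u n - x)) atTop (𝓝 (y - δ x)) := by
      have : (fun n => δ (u n - x)) = fun n => (δ ∘ u) n - δ x := by
        funext n; simp [map_sub]
      rw [this]
      exact hy.sub tendsto_const_nhds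
    have h1 : Tendsto (fun n => (⟪η, ι (δ (u n - x)) ξ⟫ : ℂ)) atTop
        (𝓝 ⟪η, ι (y - δ x) ξ⟫) := ((hfun ξ η).tendsto _).comp hδ
    -- but also → 0 since u n - x → 0 in operator norm and ι∘δ is implemented by T
    have hz : Tendsto (fun n => u n - x) atTop (𝓝 0) := by
      simpa using hu.sub (tendsto_const_nhds : Tendsto (fun _ : ℕ => x) atTop (𝓝 x))
    have hcomm : Tendsto (fun n => T * (u n - x) - (u n - x) * T) atTop
        (𝓝 (0 : H →L[ℂ] H)) := by
      have : Tendsto (fun A : H →L[ℂ] H => T * A - A * T) (𝓝 0) (𝓝 (T * 0 - 0 * T)) := by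
        exact ((continuous_const.mul continuous_id).sub
          (continuous_id.mul continuous_const)).tendsto 0
      simpa [Function.comp_def] using this.comp hz
    have hg : Continuous fun A : H →L[ℂ] H => (⟪η, A ξ⟫ : ℂ) :=
      (innerSL ℂ η).continuous.comp (ContinuousLinearMap.apply ℂ H ξ).continuous
    have h2' := (hg.tendsto 0).comp hcomm
    simp only [Function.comp_def, ContinuousLinearMap.zero_apply, inner_zero_right] at h2'
    have h2 : Tendsto (fun n => (⟪η, ι (δ (u n - x)) ξ⟫ : ℂ)) atTop (𝓝 0) := by
      have heq : (fun n => (⟪η, ι (δ (u n - x)) ξ⟫ : ℂ))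
          = fun n => (⟪η, (T * (u n - x) - (u n - x) * T) ξ⟫ : ℂ) := by
        funext n; rw [hTδ]
      rw [heq]; exact h2'
    exact tendsto_nhds_unique h1 h2
  have : y - δ x = 0 := hinj (hsub.trans (map_zero ι).symm)
  exact sub_eq_zero.mp this
end

section
/- Let H be a complex Hilbert space and let E be a two-sided ideal of B(H) consisting of compact operators, equipped with a norm ‖·‖_E under which E is a Banach space, satisfying ‖a x b‖_E ≤ ‖a‖ ‖x‖_E ‖b‖ for all x ∈ E, a, b ∈ B(H), and additionally ‖x‖ ≤ ‖x‖_E for all x ∈ E (where ‖x‖ is the operator norm). Then every derivation δ : E → E is bounded, and there exists an operator d ∈ B(H) such that δ(x) = d x − x d for all x ∈ E and ‖d‖ ≤ ‖δ‖, where ‖δ‖ is the operator norm of δ as a map from (E, ‖·‖_E) to itself. -/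
open Filter Topology

noncomputable section

namespace DerivIdealAux

variable {H : Type*} [NormedAddCommGroup H] [InnerProductSpace ℂ H]

/-- rank-one operator `ζ ↦ ⟪v, ζ⟫ • u`. -/
def rk (u v : H) : H →L[ℂ] H := ((innerSL ℂ) v).smulRight u

@[simp] lemma rk_apply (u v ζ : H) : rk u v ζ = (inner ℂ v ζ : ℂ) • u := rfl

lemma norm_rk (u v : H) : ‖rk u v‖ = ‖v‖ * ‖u‖ := by
  rw [rk, ContinuousLinearMap.norm_smulRight_apply, innerSL_apply_norm]

lemma mul_rk (A : H →L[ℂ] H) (u v : H) : A * rk u v = rk (A u) v := by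
  ext ζ; simp [ContinuousLinearMap.mul_apply]

lemma rk_mul_rk (u v u' v' : H) :
    rk u v * rk u' v' = (inner ℂ v u' : ℂ) • rk u v' := by
  ext ζ
  simp [ContinuousLinearMap.mul_apply, smul_smul, mul_comm]

lemma rk_add (u u' v : H) : rk (u + u') v = rk u v + rk u' v := by
  ext ζ; simp [rk_apply, smul_add]

lemma rk_smul (c : ℂ) (u v : H) : rk (c • u) v = c • rk u v := by
  ext ζ; simp only [rk_apply, ContinuousLinearMap.coe_smul', Pi.smul_apply]; rw [smul_comm]

end DerivIdealAux

open DerivIdealAux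

/-- Let `H` be a complex Hilbert space and `E` a two-sided ideal of `B(H)`
consisting of compact operators (encoded via an injective linear embedding `ι`), with a Banach
norm satisfying the bimodule inequality and moreover `‖x‖ ≤ ‖x‖_E` (operator norm versus ideal
norm).  Then every derivation `δ : E → E` is bounded, and it is implemented by an operator
`d ∈ B(H)`: `δ(x) = d x - x d` for all `x ∈ E`, with `‖d‖ ≤ ‖δ‖` (the operator norm of `δ`
as a bounded map of `(E, ‖·‖_E)` to itself). -/
theorem derivation_on_banach_ideal_is_spatial
    {H : Type*} [NormedAddCommGroup H] [InnerProductSpace ℂ H] [CompleteSpace H]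
    (E : Type*) [NormedAddCommGroup E] [NormedSpace ℂ E] [CompleteSpace E]
    (ι : E →ₗ[ℂ] (H →L[ℂ] H)) (hinj : Function.Injective ι)
    (hcompact : ∀ x : E, IsCompactOperator (ι x))
    (hideal : ∀ (a b : H →L[ℂ] H) (x : E),
      ∃ y : E, ι y = a * ι x * b ∧ ‖y‖ ≤ ‖a‖ * ‖x‖ * ‖b‖)
    (hle : ∀ x : E, ‖ι x‖ ≤ ‖x‖)
    (δ : E →ₗ[ℂ] E)
    (hleib : ∀ x y z : E, ι z = ι x * ι y →
      ι (δ z) = ι (δ x) * ι y + ι x * ι (δ y)) :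
    ∃ δ' : E →L[ℂ] E, (⇑δ' = ⇑δ) ∧
      ∃ d : H →L[ℂ] H, (∀ x : E, ι (δ x) = d * ι x - ι x * d) ∧ ‖d‖ ≤ ‖δ'‖ := by
  classical
  by_cases htriv : ∀ x : E, x = 0
  · refine ⟨0, funext fun x => ?_, 0, fun x => ?_, by simp⟩
    · rw [htriv x]; simp
    · rw [htriv x]; simp
  push_neg at htriv
  obtain ⟨x₀, hx₀⟩ := htriv
  have hι₀ : ι x₀ ≠ 0 := fun h => hx₀ (hinj (by rw [h, map_zero]))
  obtain ⟨α, hα⟩ : ∃ α, ι x₀ α ≠ 0 := by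
    by_contra h
    push_neg at h
    exact hι₀ (ContinuousLinearMap.ext h)
  set β : H := ι x₀ α with hβdef
  have hβne : β ≠ 0 := hα
  set ξ₀ : H := (‖β‖⁻¹ : ℂ) • β with hξ₀def
  have hξ₀ : ‖ξ₀‖ = 1 := norm_smul_inv_norm hβne
  have hξ₀ne : ξ₀ ≠ 0 := by
    intro h; rw [h, norm_zero] at hξ₀; exact one_ne_zero hξ₀.symm
  have hip : (inner ℂ ξ₀ ξ₀ : ℂ) = 1 := by
    rw [inner_self_eq_norm_sq_to_K, hξ₀]; norm_num
  set p : H →L[ℂ] H := rk ξ₀ ξ₀ with hpdef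
  have hnp : ‖p‖ = 1 := by rw [hpdef, norm_rk, hξ₀, one_mul]
  -- an element `e` of `E` with `ι e = p`
  obtain ⟨e, he0, -⟩ := hideal (rk ((‖β‖⁻¹ : ℂ) • ξ₀) ξ₀) (rk α ξ₀) x₀
  have he : ι e = p := by
    rw [he0, mul_assoc, mul_rk, ← hβdef, rk_smul, smul_mul_assoc, rk_mul_rk]
    rw [hξ₀def, inner_smul_left, inner_self_eq_norm_sq_to_K]
    rw [smul_smul, ← hξ₀def, ← hpdef]
    have hn : (‖β‖ : ℂ) ≠ 0 := by
      simpa using norm_ne_zero_iff.mpr hβne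
    convert one_smul ℂ p using 2
    rw [map_inv₀, Complex.conj_ofReal]
    field_simp
    rfl
  have hpξ₀ : p ξ₀ = ξ₀ := by rw [hpdef]; simp [hip, hξ₀]
  have hcpos : (0:ℝ) < ‖e‖ := by
    rw [norm_pos_iff]
    intro h
    rw [h, map_zero] at he
    exact hξ₀ne (by rw [← hpξ₀, ← he]; simp)
  -- the elements `Y η` with `ι (Y η) = rk η ξ₀`
  have hYex : ∀ η : H, ∃ y : E, ι y = rk η ξ₀ ∧ ‖y‖ ≤ ‖η‖ * ‖e‖ := by
    intro η
    obtain ⟨y, h1, h2⟩ := hideal (rk η ξ₀) p e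
    refine ⟨y, ?_, ?_⟩
    · rw [h1, he, mul_assoc, rk_mul_rk, hip, one_smul, rk_mul_rk, hip, one_smul]
    · calc ‖y‖ ≤ ‖rk η ξ₀‖ * ‖e‖ * ‖p‖ := h2
        _ = ‖η‖ * ‖e‖ := by rw [norm_rk, hξ₀, hnp, one_mul, mul_one]
  choose Y hY1 hY2 using hYex
  -- continuity of δ via the closed graph theorem
  have hcont : Continuous δ := by
    apply LinearMap.continuous_of_seq_closed_graph
    intro u x v hu hv
    set w : ℕ → E := fun n => u n - x with hwdef
    set z : E := v - δ x with hzdef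
    have hw : Tendsto w atTop (𝓝 0) := by
      simpa using hu.sub_const x
    have hz : Tendsto (fun n => δ (w n)) atTop (𝓝 z) := by
      have h1 : Tendsto (fun n => δ (u n) - δ x) atTop (𝓝 (v - δ x)) := by
        exact (hv.sub_const (δ x))
      refine h1.congr fun n => ?_
      rw [hwdef]; simp [map_sub]
    have hwop : Tendsto (fun n => ι (w n)) atTop (𝓝 0) := by
      rw [tendsto_zero_iff_norm_tendsto_zero]
      refine squeeze_zero (fun n => norm_nonneg _) (fun n => hle (w n)) ?_
      exact tendsto_zero_iff_norm_tendsto_zero.mp hw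
    have hzop : Tendsto (fun n => ι (δ (w n))) atTop (𝓝 (ι z)) := by
      rw [tendsto_iff_norm_sub_tendsto_zero]
      have hb : ∀ n, ‖ι (δ (w n)) - ι z‖ ≤ ‖δ (w n) - z‖ := by
        intro n
        rw [← map_sub]
        exact hle _
      refine squeeze_zero (fun n => norm_nonneg _) hb ?_
      exact tendsto_zero_iff_norm_tendsto_zero.mp (by simpa using hz.sub_const z)
    have key : ∀ a b : H, rk a b * ι z * rk a b = 0 := by
      intro a b
      obtain ⟨f, hf0, -⟩ := hideal (rk a ξ₀) (rk ξ₀ b) e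
      have hf : ι f = rk a b := by
        rw [hf0, he, mul_assoc, rk_mul_rk, hip, one_smul, rk_mul_rk, hip, one_smul]
      have hU : ∀ n, ∃ y : E, ι y = ι (w n) * ι f := by
        intro n
        obtain ⟨y, h1, -⟩ := hideal (ι (w n)) 1 f
        exact ⟨y, by rw [h1, mul_one]⟩
      choose U hU using hU
      have hgι : ∀ n, ι ((inner ℂ b (ι (w n) a) : ℂ) • f) = ι f * ι (U n) := by
        intro n
        rw [map_smul, hU, hf, mul_rk, rk_mul_rk]
      have main : ∀ n, ι (δ ((inner ℂ b (ι (w n) a) : ℂ) • f))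
          = ι (δ f) * (ι (w n) * ι f) + (ι f * (ι (δ (w n)) * ι f) + ι f * (ι (w n) * ι (δ f))) := by
        intro n
        rw [hleib f (U n) _ (hgι n), hU n, hleib (w n) f (U n) (hU n), mul_add]
      have hsc : Tendsto (fun n => (inner ℂ b (ι (w n) a) : ℂ)) atTop (𝓝 0) := by
        have hb : ∀ n, ‖(inner ℂ b (ι (w n) a) : ℂ)‖ ≤ (‖b‖ * ‖a‖) * ‖ι (w n)‖ := by
          intro n
          calc ‖(inner ℂ b (ι (w n) a) : ℂ)‖ ≤ ‖b‖ * ‖ι (w n) a‖ := norm_inner_le_norm _ _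
            _ ≤ ‖b‖ * (‖ι (w n)‖ * ‖a‖) :=
                mul_le_mul_of_nonneg_left ((ι (w n)).le_opNorm a) (norm_nonneg b)
            _ = (‖b‖ * ‖a‖) * ‖ι (w n)‖ := by ring
        rw [tendsto_zero_iff_norm_tendsto_zero]
        refine squeeze_zero (fun n => norm_nonneg _) hb ?_
        have h3 := (tendsto_zero_iff_norm_tendsto_zero.mp hwop).const_mul (‖b‖ * ‖a‖)
        simpa using h3
      have hL : Tendsto (fun n => ι (δ ((inner ℂ b (ι (w n) a) : ℂ) • f))) atTop (𝓝 0) := by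
        have heq : ∀ n, ((inner ℂ b (ι (w n) a) : ℂ) • ι (δ f))
            = ι (δ ((inner ℂ b (ι (w n) a) : ℂ) • f)) := by
          intro n; rw [map_smul, map_smul]
        refine Filter.Tendsto.congr heq ?_
        simpa using hsc.smul_const (ι (δ f))
      have t1 : Tendsto (fun n => ι (δ f) * (ι (w n) * ι f)) atTop
          (𝓝 (ι (δ f) * ((0 : H →L[ℂ] H) * ι f))) :=
        (hwop.mul_const (ι f)).const_mul _
      have t2 : Tendsto (fun n => ι f * (ι (δ (w n)) * ι f)) atTop
          (𝓝 (ι f * (ι z * ι f))) :=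
        (hzop.mul_const (ι f)).const_mul _
      have t3 : Tendsto (fun n => ι f * (ι (w n) * ι (δ f))) atTop
          (𝓝 (ι f * ((0 : H →L[ℂ] H) * ι (δ f)))) :=
        (hwop.mul_const (ι (δ f))).const_mul _
      have h0 := tendsto_nhds_unique (Filter.Tendsto.congr main hL) (t1.add (t2.add t3))
      have h0' := h0.symm
      simp only [zero_mul, mul_zero, add_zero, zero_add] at h0'
      rw [← hf, mul_assoc]
      exact h0'
    have hz0 : ι z = 0 := by
      ext ζ
      rw [ContinuousLinearMap.zero_apply]
      rcases eq_or_ne ζ 0 with h0 | h0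
      · rw [h0, map_zero]
      by_contra hne
      have hk := congrArg (fun A : H →L[ℂ] H => A (ι z ζ)) (key ζ (ι z ζ))
      simp only [ContinuousLinearMap.mul_apply, ContinuousLinearMap.zero_apply, rk_apply,
        map_smul, inner_smul_right, smul_smul] at hk
      rcases smul_eq_zero.mp hk with hs | hzeta
      · rcases mul_eq_zero.mp hs with hs1 | hs1
        · exact hne (inner_self_eq_zero.mp hs1)
        · exact hne (inner_self_eq_zero.mp hs1)
      · exact h0 hzeta
    have hzz : z = 0 := hinj (by rw [hz0, map_zero])
    rw [hzdef, sub_eq_zero] at hzz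
    exact hzz
  set δ' : E →L[ℂ] E := ⟨δ, hcont⟩ with hδ'def
  have hYadd : ∀ η η', Y (η + η') = Y η + Y η' := fun η η' =>
    hinj (by rw [map_add, hY1, hY1, hY1, rk_add])
  have hYsmul : ∀ (s : ℂ) (η : H), Y (s • η) = s • Y η := fun s η =>
    hinj (by rw [map_smul, hY1, hY1, rk_smul])
  set dlin : H →ₗ[ℂ] H :=
    { toFun := fun η => ι (δ (Y η)) ξ₀
      map_add' := fun η η' => by
        show ι (δ (Y (η + η'))) ξ₀ = ι (δ (Y η)) ξ₀ + ι (δ (Y η')) ξ₀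
        rw [hYadd, map_add, map_add, ContinuousLinearMap.add_apply]
      map_smul' := fun s η => by
        show ι (δ (Y (s • η))) ξ₀ = s • ι (δ (Y η)) ξ₀
        rw [hYsmul, δ.map_smul, ι.map_smul, ContinuousLinearMap.smul_apply] } with hdlindef
  have hdb : ∀ η, ‖dlin η‖ ≤ (‖δ'‖ * ‖e‖) * ‖η‖ := by
    intro η
    calc ‖dlin η‖ = ‖ι (δ (Y η)) ξ₀‖ := rfl
      _ ≤ ‖ι (δ (Y η))‖ * ‖ξ₀‖ := (ι (δ (Y η))).le_opNorm _
      _ = ‖ι (δ (Y η))‖ := by rw [hξ₀, mul_one]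
      _ ≤ ‖δ (Y η)‖ := hle _
      _ = ‖δ' (Y η)‖ := rfl
      _ ≤ ‖δ'‖ * ‖Y η‖ := δ'.le_opNorm _
      _ ≤ ‖δ'‖ * (‖η‖ * ‖e‖) := mul_le_mul_of_nonneg_left (hY2 η) (norm_nonneg _)
      _ = (‖δ'‖ * ‖e‖) * ‖η‖ := by ring
  set d₀ : H →L[ℂ] H := dlin.mkContinuous _ hdb with hd₀def
  have hd₀app : ∀ η, d₀ η = ι (δ (Y η)) ξ₀ := fun η => rfl
  have hder₀ : ∀ x : E, ι (δ x) = d₀ * ι x - ι x * d₀ := by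
    intro x
    ext ζ
    have h1 : ι (Y (ι x ζ)) = ι x * ι (Y ζ) := by
      rw [hY1, hY1, mul_rk]
    have h3 := congrArg (fun A : H →L[ℂ] H => A ξ₀) (hleib x (Y ζ) (Y (ι x ζ)) h1)
    simp only [ContinuousLinearMap.add_apply, ContinuousLinearMap.mul_apply] at h3
    rw [hY1 ζ] at h3
    have h4 : (rk ζ ξ₀) ξ₀ = ζ := by rw [rk_apply, hip, one_smul]
    rw [h4] at h3
    simp only [ContinuousLinearMap.sub_apply, ContinuousLinearMap.mul_apply, hd₀app]
    rw [h3]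
    abel
  set lam : ℂ := inner ℂ ξ₀ (d₀ ξ₀) with hlamdef
  set d : H →L[ℂ] H := d₀ - lam • 1 with hddef
  have hder : ∀ x : E, ι (δ x) = d * ι x - ι x * d := by
    intro x
    rw [hder₀ x, hddef]
    simp only [sub_mul, mul_sub, smul_mul_assoc, mul_smul_comm, one_mul, mul_one]
    abel
  refine ⟨δ', rfl, d, hder, ?_⟩
  have claim : ∀ ξ : H, ‖ξ‖ = 1 → ‖d ξ‖ ≤ ‖δ'‖ := by
    intro ξ hξ
    have hAξ₀ : ι (δ (Y ξ)) ξ₀ = d ξ := by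
      have hA : ι (δ (Y ξ)) = d₀ * rk ξ ξ₀ - rk ξ ξ₀ * d₀ := by
        have h5 := hder₀ (Y ξ); rwa [hY1] at h5
      rw [hA]
      simp only [ContinuousLinearMap.sub_apply, ContinuousLinearMap.mul_apply, rk_apply,
        hip, one_smul]
      rw [hddef]
      simp only [ContinuousLinearMap.sub_apply, ContinuousLinearMap.smul_apply,
        ContinuousLinearMap.one_apply]
      rfl
    rcases eq_or_ne ‖d ξ‖ 0 with hμ | hμ
    · rw [hμ]; exact norm_nonneg δ'
    have hμpos : 0 < ‖d ξ‖ := lt_of_le_of_ne (norm_nonneg _) (Ne.symm hμ)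
    have hμC : ((‖d ξ‖ : ℂ)) ≠ 0 := by
      simpa using hμ
    obtain ⟨y, h1, h2⟩ := hideal (((‖d ξ‖ : ℂ))⁻¹ • rk ξ₀ (d ξ)) p (δ (Y ξ))
    have hyval : ι y = ι ((‖d ξ‖ : ℂ) • e) := by
      rw [h1, map_smul, he, smul_mul_assoc, smul_mul_assoc, mul_assoc]
      rw [hpdef, mul_rk, hAξ₀, rk_mul_rk]
      rw [inner_self_eq_norm_sq_to_K, smul_smul, ← hpdef]
      congr 1
      field_simp
      rfl
    have hyeq : y = (‖d ξ‖ : ℂ) • e := hinj hyval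
    have hna : ‖((‖d ξ‖ : ℂ))⁻¹ • rk ξ₀ (d ξ)‖ = 1 := by
      rw [norm_smul, norm_rk, hξ₀, mul_one]
      simp [abs_of_nonneg (norm_nonneg (d ξ)), hμ]
    rw [hyeq] at h2
    rw [hna, hnp, one_mul, mul_one, norm_smul] at h2
    have h2' : ‖d ξ‖ * ‖e‖ ≤ ‖δ (Y ξ)‖ := by
      simpa [abs_of_nonneg (norm_nonneg (d ξ))] using h2
    have h5 : ‖δ (Y ξ)‖ ≤ ‖δ'‖ * ‖e‖ := by
      calc ‖δ (Y ξ)‖ = ‖δ' (Y ξ)‖ := rfl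
        _ ≤ ‖δ'‖ * ‖Y ξ‖ := δ'.le_opNorm _
        _ ≤ ‖δ'‖ * (‖ξ‖ * ‖e‖) := mul_le_mul_of_nonneg_left (hY2 ξ) (norm_nonneg _)
        _ = ‖δ'‖ * ‖e‖ := by rw [hξ, one_mul]
    exact le_of_mul_le_mul_right (h2'.trans h5) hcpos
  apply ContinuousLinearMap.opNorm_le_bound _ (norm_nonneg δ')
  intro ξ
  rcases eq_or_ne ξ 0 with h0 | h0
  · rw [h0]; simp
  have hpos : 0 < ‖ξ‖ := norm_pos_iff.mpr h0
  have h1 : ‖(‖ξ‖⁻¹ : ℂ) • ξ‖ = 1 := norm_smul_inv_norm h0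
  have h2 := claim _ h1
  rw [map_smul, norm_smul] at h2
  have h3 : ‖((‖ξ‖⁻¹ : ℂ))‖ = ‖ξ‖⁻¹ := by
    simp [abs_of_nonneg (inv_nonneg.mpr (norm_nonneg ξ))]
  rw [h3] at h2
  calc ‖d ξ‖ = ‖ξ‖ * (‖ξ‖⁻¹ * ‖d ξ‖) := by field_simp
    _ ≤ ‖ξ‖ * ‖δ'‖ := mul_le_mul_of_nonneg_left h2 (norm_nonneg _)
    _ = ‖δ'‖ * ‖ξ‖ := mul_comm _ _
end
end

section
/- Let ℓ∞ = ℓ∞(ℕ, ℂ) be the algebra of bounded complex sequences with pointwise multiplication and supremum norm, and let c₀ ⊆ ℓ∞ be the ideal of sequences converging to 0. Let E ⊆ c₀ be a linear subspace that is closed under pointwise multiplication by elements of ℓ∞, equipped with a norm ‖·‖_E under which E is a Banach space and which satisfies ‖a · x‖_E ≤ ‖a‖_∞ ‖x‖_E for all a ∈ ℓ∞ and x ∈ E. Then every derivation δ : E → E (linear map satisfying δ(xy) = δ(x)y + xδ(y) for the pointwise product) vanishes identically. -/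
open ENNReal

/-- Let `E ⊆ c₀` be a linear subspace of vanishing complex sequences
(encoded as a normed space `E` with an injective linear embedding `ι` into `ℕ → ℂ` whose
range consists of sequences tending to `0`), closed under pointwise multiplication by bounded
sequences `a ∈ ℓ∞`, equipped with a Banach norm satisfying `‖a · x‖_E ≤ ‖a‖_∞ ‖x‖_E`.
Then every derivation `δ : E → E` vanishes identically. -/
theorem derivation_on_banach_ideal_in_c0_vanishes
    (E : Type*) [NormedAddCommGroup E] [NormedSpace ℂ E] [CompleteSpace E]
    (ι : E →ₗ[ℂ] (ℕ → ℂ)) (hinj : Function.Injective ι)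
    (hc0 : ∀ x : E, Filter.Tendsto (ι x) Filter.atTop (nhds 0))
    (hmod : ∀ (a : lp (fun _ : ℕ => ℂ) ∞) (x : E),
      ∃ y : E, ι y = ⇑a * ι x ∧ ‖y‖ ≤ ‖a‖ * ‖x‖)
    (δ : E →ₗ[ℂ] E)
    (hleib : ∀ x y z : E, ι z = ι x * ι y →
      ι (δ z) = ι (δ x) * ι y + ι x * ι (δ y)) :
    ∀ x : E, δ x = 0 := by
  intro x
  rw [← hinj.eq_iff, map_zero]
  funext n
  show ι (δ x) n = (0 : ℕ → ℂ) n
  simp only [Pi.zero_apply]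
  by_cases hE : ∀ u : E, ι u n = 0
  · exact hE (δ x)
  push_neg at hE
  obtain ⟨u, hu⟩ := hE
  set a : lp (fun _ : ℕ => ℂ) ∞ := lp.single ∞ n (1 : ℂ) with ha
  have haap : ∀ m, (a : ℕ → ℂ) m = if m = n then 1 else 0 := by
    intro m
    by_cases hm : m = n
    · subst hm; simp [ha, lp.single_apply_self]
    · simp [ha, lp.single_apply_ne _ _ _ hm, hm]
  obtain ⟨y, hy, -⟩ := hmod a u
  set p := (ι u n)⁻¹ • y with hp
  have hιp : ι p = ⇑a := by
    funext m
    simp only [hp, map_smul, Pi.smul_apply, hy, Pi.mul_apply, smul_eq_mul, haap m]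
    by_cases hm : m = n
    · subst hm; simp [inv_mul_cancel₀ hu]
    · simp [hm]
  have hpp : ι p = ι p * ι p := by
    funext m
    simp only [hιp, Pi.mul_apply, haap m]
    by_cases hm : m = n <;> simp [hm]
  have hdp : δ p = 0 := by
    rw [← hinj.eq_iff, map_zero]
    funext m
    have h := congrFun (hleib p p p hpp) m
    simp only [Pi.add_apply, Pi.mul_apply, hιp, haap m] at h
    show ι (δ p) m = (0 : ℕ → ℂ) m
    simp only [Pi.zero_apply]
    by_cases hm : m = n
    · subst hm
      simp only [eq_self_iff_true, if_true, mul_one, one_mul] at h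
      linear_combination -h
    · simpa [hm] using h
  obtain ⟨y', hy', -⟩ := hmod a x
  have hy'p : y' = (ι x n) • p := by
    apply hinj
    funext m
    simp only [hy', map_smul, Pi.smul_apply, Pi.mul_apply, smul_eq_mul, hιp, haap m]
    by_cases hm : m = n
    · subst hm; ring
    · simp [hm]
  have hfact : ι y' = ι p * ι x := by rw [hy', hιp]
  have h := congrFun (hleib p x y' hfact) n
  have hδy' : δ y' = 0 := by rw [hy'p, map_smul, hdp, smul_zero]
  rw [hδy', hdp] at h
  simp only [map_zero, Pi.zero_apply, Pi.add_apply, Pi.mul_apply, zero_mul, zero_add,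
    hιp, haap n, eq_self_iff_true, if_true, one_mul] at h
  exact h.symm
end

section
/- Fix 1 ≤ p < ∞ and let m be Lebesgue measure on (0,1). Then every derivation δ : L∞(0,1) → L_p(0,1), i.e., every linear map satisfying δ(fg) = δ(f)·g + f·δ(g) (pointwise products) for all f, g ∈ L∞(0,1), vanishes identically. -/
open MeasureTheory ENNReal

/-- Fix `1 ≤ p < ∞` and let `μ` be Lebesgue measure on `(0,1)`.  Every
derivation `δ : L∞(0,1) → L_p(0,1)` (a linear map satisfying the Leibniz rule for pointwise
products, stated in the space `ℝ →ₘ[μ] ℂ` of a.e. classes; the product `f * g` of two elements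
of `L∞` is recorded through any representative `h ∈ L∞` with `↑h = ↑f * ↑g`) vanishes
identically. -/
theorem derivation_linfty_into_Lp_vanishes
    (p : ℝ≥0∞) [Fact (1 ≤ p)] (hp : p ≠ ∞)
    (μ : Measure ℝ) (hμ : μ = volume.restrict (Set.Ioo (0 : ℝ) 1))
    (δ : Lp ℂ ∞ μ →ₗ[ℂ] Lp ℂ p μ)
    (hleib : ∀ f g h : Lp ℂ ∞ μ, (h : ℝ →ₘ[μ] ℂ) = (f : ℝ →ₘ[μ] ℂ) * (g : ℝ →ₘ[μ] ℂ) →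
      (δ h : ℝ →ₘ[μ] ℂ) = (δ f : ℝ →ₘ[μ] ℂ) * (g : ℝ →ₘ[μ] ℂ)
        + (f : ℝ →ₘ[μ] ℂ) * (δ g : ℝ →ₘ[μ] ℂ)) :
    ∀ f : Lp ℂ ∞ μ, δ f = 0 := by
  -- basic facts about `μ`
  have hIio : ∀ b : ℝ, b ≤ 0 → μ (Set.Iio b) = 0 := by
    intro b hb
    rw [hμ, Measure.restrict_apply measurableSet_Iio]
    convert measure_empty (μ := (volume : Measure ℝ))
    ext x
    simp only [Set.mem_inter_iff, Set.mem_Iio, Set.mem_Ioo, Set.mem_empty_iff_false, iff_false]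
    rintro ⟨h1, h2, h3⟩
    linarith
  have hIci : ∀ b : ℝ, 1 ≤ b → μ (Set.Ici b) = 0 := by
    intro b hb
    rw [hμ, Measure.restrict_apply measurableSet_Ici]
    convert measure_empty (μ := (volume : Measure ℝ))
    ext x
    simp only [Set.mem_inter_iff, Set.mem_Ici, Set.mem_Ioo, Set.mem_empty_iff_false, iff_false]
    rintro ⟨h1, h2, h3⟩
    linarith
  haveI : IsFiniteMeasure μ := by
    constructor
    rw [hμ, Measure.restrict_apply_univ, Real.volume_Ioo]
    simp
  haveI : NullSingletonClass μ := by rw [hμ]; infer_instance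
  -- the splitting lemma
  have split : ∀ A : Set ℝ, MeasurableSet A → 0 < μ A →
      ∃ B : Set ℝ, B ⊆ A ∧ MeasurableSet B ∧ 0 < μ B ∧ 0 < μ (A \ B) := by
    intro A hA hApos
    by_contra hcon
    push_neg at hcon
    have hdich : ∀ t : ℝ, μ (A ∩ Set.Iio t) = 0 ∨ μ (A \ Set.Iio t) = 0 := by
      intro t
      by_contra hd
      push_neg at hd
      have h1 := hcon (A ∩ Set.Iio t) Set.inter_subset_left (hA.inter measurableSet_Iio)
        (pos_iff_ne_zero.mpr hd.1)
      rw [Set.diff_self_inter] at h1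
      exact hd.2 (le_antisymm h1 zero_le)
    set L : Set ℝ := {t | μ (A ∩ Set.Iio t) = 0} with hLdef
    have h0L : (0:ℝ) ∈ L := by
      have : μ (A ∩ Set.Iio 0) ≤ μ (Set.Iio 0) := measure_mono Set.inter_subset_right
      simpa [hLdef] using le_antisymm (this.trans (hIio 0 le_rfl).le) zero_le
    have hLne : L.Nonempty := ⟨0, h0L⟩
    have hLub : ∀ t ∈ L, t ≤ 1 := by
      intro t ht
      by_contra hgt
      push_neg at hgt
      have hz : μ (A \ Set.Iio t) = 0 := by
        have : A \ Set.Iio t ⊆ Set.Ici 1 := by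
          intro x hx
          simp only [Set.mem_diff, Set.mem_Iio, not_lt] at hx
          exact le_trans hgt.le hx.2
        exact le_antisymm ((measure_mono this).trans (hIci 1 le_rfl).le) zero_le
      have : μ A ≤ μ (A ∩ Set.Iio t) + μ (A \ Set.Iio t) := by
        conv_lhs => rw [← Set.inter_union_diff A (Set.Iio t)]
        exact measure_union_le _ _
      rw [ht, hz] at this
      simpa using lt_of_lt_of_le hApos this
    have hbdd : BddAbove L := ⟨1, hLub⟩
    have hdown : ∀ s t : ℝ, s ≤ t → t ∈ L → s ∈ L := by
      intro s t hst ht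
      exact le_antisymm ((measure_mono
        (Set.inter_subset_inter_right A (Set.Iio_subset_Iio hst))).trans ht.le) zero_le
    set t0 := sSup L with ht0
    have claim1 : μ (A ∩ Set.Iio t0) = 0 := by
      have hcov : A ∩ Set.Iio t0 ⊆ ⋃ q : ℚ, (if (q:ℝ) < t0 then A ∩ Set.Iio (q:ℝ) else ∅) := by
        rintro x ⟨hxA, hxlt⟩
        obtain ⟨q, hq1, hq2⟩ := exists_rat_btwn (Set.mem_Iio.mp hxlt)
        refine Set.mem_iUnion.mpr ⟨q, ?_⟩
        rw [if_pos hq2]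
        exact ⟨hxA, hq1⟩
      refine le_antisymm ((measure_mono hcov).trans ?_) zero_le
      refine le_of_eq (measure_iUnion_null fun q => ?_)
      split_ifs with hq
      · obtain ⟨l, hlL, hql⟩ := exists_lt_of_lt_csSup hLne hq
        exact hdown q l hql.le hlL
      · simp
    have claim2 : μ (A \ Set.Iic t0) = 0 := by
      have hcov : A \ Set.Iic t0 ⊆ ⋃ q : ℚ, (if t0 < (q:ℝ) then A \ Set.Iio (q:ℝ) else ∅) := by
        rintro x ⟨hxA, hxgt⟩
        simp only [Set.mem_Iic, not_le] at hxgt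
        obtain ⟨q, hq1, hq2⟩ := exists_rat_btwn hxgt
        refine Set.mem_iUnion.mpr ⟨q, ?_⟩
        rw [if_pos hq1]
        exact ⟨hxA, by simp only [Set.mem_Iio, not_lt]; exact hq2.le⟩
      refine le_antisymm ((measure_mono hcov).trans ?_) zero_le
      refine le_of_eq (measure_iUnion_null fun q => ?_)
      split_ifs with hq
      · rcases hdich q with h | h
        · exfalso
          have : (q:ℝ) ∈ L := h
          exact absurd (le_csSup hbdd this) (not_le.mpr hq)
        · exact h
      · simp
    have hAcover : A ⊆ (A ∩ Set.Iio t0) ∪ ({t0} ∪ (A \ Set.Iic t0)) := by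
      intro x hx
      rcases lt_trichotomy x t0 with h | h | h
      · exact Or.inl ⟨hx, h⟩
      · exact Or.inr (Or.inl h)
      · exact Or.inr (Or.inr ⟨hx, by simp [Set.mem_Iic, not_le, h]⟩)
    have : μ A ≤ 0 := by
      calc μ A ≤ μ ((A ∩ Set.Iio t0) ∪ ({t0} ∪ (A \ Set.Iic t0))) := measure_mono hAcover
        _ ≤ μ (A ∩ Set.Iio t0) + (μ {t0} + μ (A \ Set.Iic t0)) :=
          le_trans (measure_union_le _ _) (by gcongr; exact measure_union_le _ _)
        _ = 0 := by rw [claim1, claim2, measure_singleton]; simp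
    simpa using lt_of_lt_of_le hApos this
  -- derivations kill idempotents
  have hidem : ∀ e : Lp ℂ ∞ μ,
      (e : ℝ →ₘ[μ] ℂ) * (e : ℝ →ₘ[μ] ℂ) = (e : ℝ →ₘ[μ] ℂ) → δ e = 0 := by
    intro e he
    have hl := hleib e e e he.symm
    have h1 : ⇑((δ e : ℝ →ₘ[μ] ℂ))
        = ⇑(((δ e : ℝ →ₘ[μ] ℂ)) * (e : ℝ →ₘ[μ] ℂ) + (e : ℝ →ₘ[μ] ℂ) * (δ e : ℝ →ₘ[μ] ℂ)) :=
      congrArg _ hl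
    have h2 : ⇑((e : ℝ →ₘ[μ] ℂ) * (e : ℝ →ₘ[μ] ℂ)) = ⇑(e : ℝ →ₘ[μ] ℂ) := congrArg _ he
    apply Lp.ext (μ := μ)
    filter_upwards [AEEqFun.coeFn_add ((δ e : ℝ →ₘ[μ] ℂ) * (e : ℝ →ₘ[μ] ℂ))
        ((e : ℝ →ₘ[μ] ℂ) * (δ e : ℝ →ₘ[μ] ℂ)),
      AEEqFun.coeFn_mul ((δ e : ℝ →ₘ[μ] ℂ)) (e : ℝ →ₘ[μ] ℂ),
      AEEqFun.coeFn_mul (e : ℝ →ₘ[μ] ℂ) ((δ e : ℝ →ₘ[μ] ℂ)),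
      AEEqFun.coeFn_mul (e : ℝ →ₘ[μ] ℂ) (e : ℝ →ₘ[μ] ℂ),
      Lp.coeFn_zero (E := ℂ) (p := p) (μ := μ)] with x ha hm1 hm2 hm3 hz
    have hax : (δ e : ℝ → ℂ) x
        = (δ e : ℝ → ℂ) x * (e : ℝ → ℂ) x + (e : ℝ → ℂ) x * (δ e : ℝ → ℂ) x := by
      have h4 := congrFun h1 x
      rw [ha, Pi.add_apply, hm1, hm2, Pi.mul_apply, Pi.mul_apply] at h4
      exact h4
    have hex : (e : ℝ → ℂ) x * (e : ℝ → ℂ) x = (e : ℝ → ℂ) x := by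
      have h3 := congrFun h2 x
      rw [hm3] at h3
      simpa using h3
    rw [hz]
    show (δ e : ℝ → ℂ) x = 0
    linear_combination (1 - 2 * (e : ℝ → ℂ) x) * hax - 4 * ((δ e : ℝ → ℂ) x) * hex
  -- the Leibniz localization
  have extract : ∀ a b h' : Lp ℂ ∞ μ, (h' : ℝ →ₘ[μ] ℂ) = (a : ℝ →ₘ[μ] ℂ) * (b : ℝ →ₘ[μ] ℂ) →
      ∀ᵐ x ∂μ, (δ h' : ℝ → ℂ) x
        = (δ a : ℝ → ℂ) x * (b : ℝ → ℂ) x + (a : ℝ → ℂ) x * (δ b : ℝ → ℂ) x := by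
    intro a b h' hab
    have s := hleib a b h' hab
    have hs : ⇑((δ h' : ℝ →ₘ[μ] ℂ))
        = ⇑((δ a : ℝ →ₘ[μ] ℂ) * (b : ℝ →ₘ[μ] ℂ) + (a : ℝ →ₘ[μ] ℂ) * (δ b : ℝ →ₘ[μ] ℂ)) :=
      congrArg _ s
    filter_upwards [AEEqFun.coeFn_add ((δ a : ℝ →ₘ[μ] ℂ) * (b : ℝ →ₘ[μ] ℂ))
        ((a : ℝ →ₘ[μ] ℂ) * (δ b : ℝ →ₘ[μ] ℂ)),
      AEEqFun.coeFn_mul ((δ a : ℝ →ₘ[μ] ℂ)) (b : ℝ →ₘ[μ] ℂ),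
      AEEqFun.coeFn_mul (a : ℝ →ₘ[μ] ℂ) ((δ b : ℝ →ₘ[μ] ℂ))] with x hadd hm1 hm2
    rw [congrFun hs x, hadd, Pi.add_apply, hm1, hm2, Pi.mul_apply, Pi.mul_apply]
  -- main argument
  intro f0
  by_contra hf0
  have hp0 : p ≠ 0 := by
    intro h0
    have h1 := Fact.out (p := 1 ≤ p)
    rw [h0] at h1
    simp at h1
  set r := p.toReal with hrdef
  have hr : 0 < r := ENNReal.toReal_pos hp0 hp
  have hφmeas : Measurable (δ f0 : ℝ → ℂ) := (Lp.stronglyMeasurable (δ f0)).measurable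
  have hF : Measurable (f0 : ℝ → ℂ) := (Lp.stronglyMeasurable f0).measurable
  -- choose the level set A0
  have hne : ¬ (δ f0 : ℝ → ℂ) =ᵐ[μ] 0 := fun h => hf0 (Lp.eq_zero_iff_ae_eq_zero.mpr h)
  obtain ⟨c, hc, hA0pos⟩ : ∃ c : ℝ, 0 < c ∧ 0 < μ {x | c < ‖(δ f0 : ℝ → ℂ) x‖} := by
    have h1 : μ {x | (δ f0 : ℝ → ℂ) x ≠ 0} ≠ 0 := by
      intro h0
      apply hne
      rw [Filter.EventuallyEq, ae_iff]
      simpa using h0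
    have hcov : {x | (δ f0 : ℝ → ℂ) x ≠ 0}
        ⊆ ⋃ k : ℕ, {x | 1 / (k + 1 : ℝ) < ‖(δ f0 : ℝ → ℂ) x‖} := by
      intro x hx
      have : 0 < ‖(δ f0 : ℝ → ℂ) x‖ := by simpa [norm_pos_iff] using hx
      obtain ⟨k, hk⟩ := exists_nat_one_div_lt this
      exact Set.mem_iUnion.mpr ⟨k, hk⟩
    by_contra hcon
    push_neg at hcon
    have hz : ∀ k : ℕ, μ {x | 1 / (k + 1 : ℝ) < ‖(δ f0 : ℝ → ℂ) x‖} = 0 := by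
      intro k
      exact le_antisymm (hcon (1 / (k + 1 : ℝ)) (by positivity)) zero_le
    exact h1 (le_antisymm ((measure_mono hcov).trans (measure_iUnion_null hz).le) zero_le)
  set A0 : Set ℝ := {x | c < ‖(δ f0 : ℝ → ℂ) x‖} with hA0def
  have hA0m : MeasurableSet A0 := measurableSet_lt measurable_const hφmeas.norm
  -- disjoint positive-measure subsets of A0
  obtain ⟨D, hDm, hDsub, hDpos, hDdisj⟩ : ∃ D : ℕ → Set ℝ, (∀ n, MeasurableSet (D n)) ∧
      (∀ n, D n ⊆ A0) ∧ (∀ n, 0 < μ (D n)) ∧ (∀ m n, m ≠ n → ∀ x, x ∈ D m → x ∉ D n) := by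
    choose! B hBsub hBmeas hBpos hBrest using split
    set step : Set ℝ → Set ℝ := fun A => A \ B A with hstep
    set R : ℕ → Set ℝ := fun n => step^[n] A0 with hR
    have hRsucc : ∀ n, R (n + 1) = R n \ B (R n) := by
      intro n
      simp only [hR, Function.iterate_succ_apply', hstep]
    have hRinv : ∀ n, MeasurableSet (R n) ∧ R n ⊆ A0 ∧ 0 < μ (R n) := by
      intro n
      induction n with
      | zero => exact ⟨hA0m, le_rfl, hA0pos⟩
      | succ k ih =>
        obtain ⟨hm, hs, hpp⟩ := ih
        rw [hRsucc k]
        exact ⟨hm.diff (hBmeas _ hm hpp), (Set.diff_subset).trans hs, hBrest _ hm hpp⟩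
    refine ⟨fun n => B (R n), fun n => hBmeas _ (hRinv n).1 (hRinv n).2.2,
      fun n => (hBsub _ (hRinv n).1 (hRinv n).2.2).trans (hRinv n).2.1,
      fun n => hBpos _ (hRinv n).1 (hRinv n).2.2, ?_⟩
    have hmono : ∀ m n, m ≤ n → R n ⊆ R m := by
      intro m n hmn
      induction n with
      | zero => rw [Nat.le_zero.mp hmn]
      | succ k ih =>
        rcases Nat.lt_or_ge m (k+1) with h | h
        · have h1 := ih (Nat.lt_succ_iff.mp h)
          rw [hRsucc k]
          exact (Set.diff_subset).trans h1
        · rw [Nat.le_antisymm hmn h]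
    have key : ∀ m n, m < n → ∀ x, x ∈ B (R m) → x ∉ B (R n) := by
      intro m n hmn x hxm hxn
      have h1 : B (R n) ⊆ R n := hBsub _ (hRinv n).1 (hRinv n).2.2
      have h2 : R n ⊆ R (m+1) := hmono _ _ hmn
      have h3 := h2 (h1 hxn)
      rw [hRsucc m] at h3
      exact h3.2 hxm
    intro m n hmn x hxm hxn
    rcases Nat.lt_or_ge m n with h | h
    · exact key m n h x hxm hxn
    · exact key n m (lt_of_le_of_ne h (Ne.symm hmn)) x hxn hxm
  -- choose the amplification factors
  obtain ⟨N, hNbig⟩ : ∃ N : ℕ → ℕ,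
      ∀ n : ℕ, (n : ℝ≥0∞) ≤ ENNReal.ofReal ((N n * c) ^ r) * μ (D n) := by
    have hex : ∀ n : ℕ, ∃ Nn : ℕ, (n : ℝ≥0∞) ≤ ENNReal.ofReal ((Nn * c) ^ r) * μ (D n) := by
      intro n
      set m := μ (D n) with hm
      have hmpos : 0 < m := hDpos n
      have hmt : m ≠ ⊤ := measure_ne_top μ _
      set M : ℝ := ((n : ℝ≥0∞) / m).toReal with hM
      have hMnn : 0 ≤ M := ENNReal.toReal_nonneg
      obtain ⟨Nn, hN⟩ := exists_nat_gt (M ^ (1/r) / c)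
      refine ⟨Nn, ?_⟩
      have h1 : M ^ (1/r) ≤ Nn * c := ((div_lt_iff₀ hc).mp hN).le
      have h2 : M ≤ (Nn * c) ^ r := by
        calc M = (M ^ (1/r)) ^ r := by
              rw [← Real.rpow_mul hMnn, one_div_mul_cancel hr.ne', Real.rpow_one]
          _ ≤ (Nn * c) ^ r := Real.rpow_le_rpow (Real.rpow_nonneg hMnn _) h1 hr.le
      have hdne : (n : ℝ≥0∞) / m ≠ ⊤ := (ENNReal.div_lt_top (ENNReal.natCast_ne_top n) hmpos.ne').ne
      have h3 : (n : ℝ≥0∞) / m ≤ ENNReal.ofReal ((Nn * c) ^ r) := by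
        rw [← ENNReal.ofReal_toReal hdne]
        exact ENNReal.ofReal_le_ofReal h2
      calc (n : ℝ≥0∞) = (n : ℝ≥0∞) / m * m := (ENNReal.div_mul_cancel hmpos.ne' hmt).symm
        _ ≤ ENNReal.ofReal ((Nn * c) ^ r) * m := mul_le_mul_left h3 m
    exact ⟨fun n => (hex n).choose, fun n => (hex n).choose_spec⟩
  -- the sliding-hump function G
  set gn : ℕ → ℝ → ℂ := fun n x =>
    ((Int.fract ((N n : ℝ) * ((f0 : ℝ → ℂ) x).re) : ℝ) : ℂ)
      + ((Int.fract ((N n : ℝ) * ((f0 : ℝ → ℂ) x).im) : ℝ) : ℂ) * Complex.I with hgn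
  have hgnmeas : ∀ n, Measurable (gn n) := by
    intro n
    apply Measurable.add
    · exact Complex.measurable_ofReal.comp
        ((measurable_const.mul (Complex.measurable_re.comp hF)).fract)
    · exact (Complex.measurable_ofReal.comp
        ((measurable_const.mul (Complex.measurable_im.comp hF)).fract)).mul_const _
  set G : ℝ → ℂ := fun x => ∑' n, (D n).indicator (gn n) x with hG
  have hGval : ∀ n x, x ∈ D n → G x = gn n x := by
    intro n x hx
    rw [hG]
    beta_reduce
    have hz : ∀ m, m ≠ n → (D m).indicator (gn m) x = 0 := by
      intro m hm
      exact Set.indicator_of_notMem (fun hxm => hDdisj m n hm x hxm hx) _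
    rw [tsum_eq_single n hz]
    exact Set.indicator_of_mem hx _
  have hGzero : ∀ x, (∀ n, x ∉ D n) → G x = 0 := by
    intro x hx
    rw [hG]
    beta_reduce
    have hz : (fun n => (D n).indicator (gn n) x) = fun _ => 0 := by
      funext m
      exact Set.indicator_of_notMem (hx m) _
    rw [hz, tsum_zero]
  have hGbdd : ∀ x, ‖G x‖ ≤ 2 := by
    intro x
    by_cases hx : ∃ n, x ∈ D n
    · obtain ⟨n, hn⟩ := hx
      rw [hGval n x hn]
      refine (norm_add_le _ _).trans ?_
      rw [norm_mul, Complex.norm_I, mul_one, Complex.norm_real, Complex.norm_real,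
        Real.norm_eq_abs, Real.norm_eq_abs]
      have h1 := Int.fract_nonneg ((N n : ℝ) * ((f0 : ℝ → ℂ) x).re)
      have h2 := Int.fract_lt_one ((N n : ℝ) * ((f0 : ℝ → ℂ) x).re)
      have h3 := Int.fract_nonneg ((N n : ℝ) * ((f0 : ℝ → ℂ) x).im)
      have h4 := Int.fract_lt_one ((N n : ℝ) * ((f0 : ℝ → ℂ) x).im)
      rw [abs_of_nonneg h1, abs_of_nonneg h3]
      linarith
    · push_neg at hx
      rw [hGzero x hx]
      simp
  have hGmeas : Measurable G := by
    have hsum : ∀ x, Summable fun n => (D n).indicator (gn n) x := by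
      intro x
      by_cases hx : ∃ n, x ∈ D n
      · obtain ⟨n, hn⟩ := hx
        apply summable_of_ne_finset_zero (s := {n})
        intro m hm
        simp only [Finset.mem_singleton] at hm
        exact Set.indicator_of_notMem (fun hxm => hDdisj m n hm x hxm hn) _
      · push_neg at hx
        have hz : (fun n => (D n).indicator (gn n) x) = fun _ => 0 := by
          funext m
          exact Set.indicator_of_notMem (hx m) _
        rw [hz]
        exact summable_zero
    apply measurable_of_tendsto_metrizable
      (f := fun (M : ℕ) x => ∑ n ∈ Finset.range M, (D n).indicator (gn n) x)
    · intro M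
      exact Finset.measurable_sum _ (fun n _ => (hgnmeas n).indicator (hDm n))
    · rw [tendsto_pi_nhds]
      intro x
      exact (hsum x).hasSum.tendsto_sum_nat
  have hGmem : MemLp G ∞ μ :=
    memLp_top_of_bound hGmeas.aestronglyMeasurable 2 (Filter.Eventually.of_forall hGbdd)
  set g : Lp ℂ ∞ μ := hGmem.toLp G with hgdef
  -- the pieces
  set P : ℕ → ℤ → ℤ → Set ℝ := fun n j k =>
    (D n ∩ {x | ⌊(N n : ℝ) * ((f0 : ℝ → ℂ) x).re⌋ = j})
      ∩ {x | ⌊(N n : ℝ) * ((f0 : ℝ → ℂ) x).im⌋ = k} with hP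
  have hPm : ∀ n j k, MeasurableSet (P n j k) := by
    intro n j k
    refine MeasurableSet.inter (MeasurableSet.inter (hDm n) ?_) ?_
    · exact (measurable_const.mul (Complex.measurable_re.comp hF)).floor (measurableSet_singleton j)
    · exact (measurable_const.mul (Complex.measurable_im.comp hF)).floor (measurableSet_singleton k)
  have hGP : ∀ n j k, ∀ x ∈ P n j k,
      G x = (N n : ℂ) * (f0 : ℝ → ℂ) x - ((j : ℂ) + (k : ℂ) * Complex.I) := by
    rintro n j k x ⟨⟨hxD, hj⟩, hk⟩
    rw [hGval n x hxD, hgn]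
    beta_reduce
    rw [← Int.self_sub_floor, ← Int.self_sub_floor, hj, hk]
    rw [← Complex.re_add_im ((f0 : ℝ → ℂ) x)]
    push_cast
    simp only [Complex.ext_iff]
    constructor <;> simp
  -- the key a.e. identity on each piece
  have hkey : ∀ n j k, ∀ᵐ x ∂μ, x ∈ P n j k →
      (δ g : ℝ → ℂ) x = (N n : ℂ) * (δ f0 : ℝ → ℂ) x := by
    intro n j k
    set P0 := P n j k with hP0def
    have hP0m : MeasurableSet P0 := hPm n j k
    set t : ℕ := N n with htdef
    set c0 : ℂ := (j : ℂ) + (k : ℂ) * Complex.I with hc0def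
    set e : Lp ℂ ∞ μ := indicatorConstLp ∞ hP0m (measure_ne_top μ P0) (1:ℂ) with he_def
    have hecoe : (e : ℝ → ℂ) =ᵐ[μ] P0.indicator (fun _ => (1:ℂ)) := indicatorConstLp_coeFn
    have hee : (e : ℝ →ₘ[μ] ℂ) * (e : ℝ →ₘ[μ] ℂ) = (e : ℝ →ₘ[μ] ℂ) := by
      apply AEEqFun.ext
      filter_upwards [AEEqFun.coeFn_mul (e : ℝ →ₘ[μ] ℂ) (e : ℝ →ₘ[μ] ℂ), hecoe] with x hm hex
      rw [hm, Pi.mul_apply]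
      show (e : ℝ → ℂ) x * (e : ℝ → ℂ) x = (e : ℝ → ℂ) x
      rw [hex]
      by_cases hx : x ∈ P0 <;> simp [hx]
    have he0 : δ e = 0 := hidem e hee
    have he0coe : (δ e : ℝ → ℂ) =ᵐ[μ] 0 := by rw [he0]; exact Lp.coeFn_zero ℂ p μ
    have hgcoe : (g : ℝ → ℂ) =ᵐ[μ] G := hGmem.coeFn_toLp
    have hG'mem : MemLp (P0.indicator G) ∞ μ := hGmem.indicator hP0m
    set h1 : Lp ℂ ∞ μ := hG'mem.toLp _ with hh1def
    have hh1coe : (h1 : ℝ → ℂ) =ᵐ[μ] P0.indicator G := hG'mem.coeFn_toLp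
    have hh1 : (h1 : ℝ →ₘ[μ] ℂ) = (e : ℝ →ₘ[μ] ℂ) * (g : ℝ →ₘ[μ] ℂ) := by
      apply AEEqFun.ext
      filter_upwards [AEEqFun.coeFn_mul (e : ℝ →ₘ[μ] ℂ) (g : ℝ →ₘ[μ] ℂ), hecoe, hgcoe, hh1coe]
        with x hm hex hgx h1x
      rw [hm, Pi.mul_apply]
      show (h1 : ℝ → ℂ) x = (e : ℝ → ℂ) x * (g : ℝ → ℂ) x
      rw [h1x, hex, hgx]
      by_cases hx : x ∈ P0 <;> simp [hx]
    have hΦmem : MemLp (P0.indicator (fun x => (t : ℂ) * (f0 : ℝ → ℂ) x)) ∞ μ :=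
      ((Lp.memLp f0).const_mul _).indicator hP0m
    set h2 : Lp ℂ ∞ μ := hΦmem.toLp _ with hh2def
    have hh2coe : (h2 : ℝ → ℂ) =ᵐ[μ] P0.indicator (fun x => (t : ℂ) * (f0 : ℝ → ℂ) x) :=
      hΦmem.coeFn_toLp
    have hsmulcoe : (((t : ℂ) • f0 : Lp ℂ ∞ μ) : ℝ → ℂ)
        =ᵐ[μ] fun x => (t : ℂ) * (f0 : ℝ → ℂ) x := by
      filter_upwards [Lp.coeFn_smul (t : ℂ) f0] with x hx
      rw [hx, Pi.smul_apply, smul_eq_mul]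
    have hh2 : (h2 : ℝ →ₘ[μ] ℂ) = (e : ℝ →ₘ[μ] ℂ) * (((t : ℂ) • f0 : Lp ℂ ∞ μ) : ℝ →ₘ[μ] ℂ) := by
      apply AEEqFun.ext
      filter_upwards [AEEqFun.coeFn_mul (e : ℝ →ₘ[μ] ℂ) (((t : ℂ) • f0 : Lp ℂ ∞ μ) : ℝ →ₘ[μ] ℂ),
        hecoe, hsmulcoe, hh2coe] with x hm hex hsx h2x
      rw [hm, Pi.mul_apply]
      show (h2 : ℝ → ℂ) x = (e : ℝ → ℂ) x * (((t : ℂ) • f0 : Lp ℂ ∞ μ) : ℝ → ℂ) x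
      rw [h2x, hex, hsx]
      by_cases hx : x ∈ P0 <;> simp [hx]
    have hlink : h1 = h2 - c0 • e := by
      apply Lp.ext (μ := μ)
      filter_upwards [hh1coe, hh2coe, Lp.coeFn_sub h2 (c0 • e), Lp.coeFn_smul c0 e, hecoe]
        with x h1x h2x hsub hsm hex
      rw [h1x, hsub, Pi.sub_apply, hsm, Pi.smul_apply, h2x, hex]
      by_cases hx : x ∈ P0
      · simp only [Set.indicator_of_mem hx, smul_eq_mul, mul_one]
        rw [hGP n j k x hx]
      · simp [Set.indicator_of_notMem hx]
    have hδ12 : δ h1 = δ h2 := by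
      rw [hlink, map_sub, LinearMap.map_smul, he0, smul_zero, sub_zero]
    have ae1 := extract e g h1 hh1
    have ae2 := extract e ((t : ℂ) • f0) h2 hh2
    have hδscoe : (δ ((t : ℂ) • f0) : ℝ → ℂ) =ᵐ[μ] fun x => (t : ℂ) * (δ f0 : ℝ → ℂ) x := by
      rw [LinearMap.map_smul]
      filter_upwards [Lp.coeFn_smul (t : ℂ) (δ f0)] with x hx
      rw [hx, Pi.smul_apply, smul_eq_mul]
    filter_upwards [ae1, ae2, he0coe, hecoe, hδscoe] with x h1x h2x h0x hex hsx
    intro hxP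
    rw [hδ12] at h1x
    rw [h2x, h0x, hex, hsx] at h1x
    simp only [Pi.zero_apply, zero_mul, zero_add, Set.indicator_of_mem hxP, one_mul] at h1x
    exact h1x.symm
  -- combine over all pieces
  have hkey' : ∀ᵐ x ∂μ, ∀ n j k, x ∈ P n j k →
      (δ g : ℝ → ℂ) x = (N n : ℂ) * (δ f0 : ℝ → ℂ) x := by
    rw [ae_all_iff]
    intro n
    rw [ae_all_iff]
    intro j
    rw [ae_all_iff]
    intro k
    exact hkey n j k
  have hDn : ∀ n, ∀ᵐ x ∂μ, x ∈ D n →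
      (δ g : ℝ → ℂ) x = (N n : ℂ) * (δ f0 : ℝ → ℂ) x := by
    intro n
    filter_upwards [hkey'] with x hx hxD
    exact hx n ⌊(N n : ℝ) * ((f0 : ℝ → ℂ) x).re⌋ ⌊(N n : ℝ) * ((f0 : ℝ → ℂ) x).im⌋ ⟨⟨hxD, rfl⟩, rfl⟩
  -- the integral blows up
  have hI : ∀ n : ℕ, (n : ℝ≥0∞) ≤ ∫⁻ x, (‖(δ g : ℝ → ℂ) x‖₊ : ℝ≥0∞) ^ r ∂μ := by
    intro n
    have hbd : ∀ᵐ x ∂μ, x ∈ D n →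
        ENNReal.ofReal ((N n * c) ^ r) ≤ (‖(δ g : ℝ → ℂ) x‖₊ : ℝ≥0∞) ^ r := by
      filter_upwards [hDn n] with x hx hxD
      have hx2 : c < ‖(δ f0 : ℝ → ℂ) x‖ := hDsub n hxD
      have hb : (N n : ℝ) * c ≤ ‖(δ g : ℝ → ℂ) x‖ := by
        rw [hx hxD, norm_mul, Complex.norm_natCast]
        exact mul_le_mul_of_nonneg_left hx2.le (Nat.cast_nonneg _)
      calc ENNReal.ofReal ((N n * c) ^ r) = (ENNReal.ofReal (N n * c)) ^ r :=
            (ENNReal.ofReal_rpow_of_nonneg (by positivity) hr.le).symm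
        _ ≤ (ENNReal.ofReal ‖(δ g : ℝ → ℂ) x‖) ^ r :=
            ENNReal.rpow_le_rpow (ENNReal.ofReal_le_ofReal hb) hr.le
        _ = (‖(δ g : ℝ → ℂ) x‖₊ : ℝ≥0∞) ^ r := by rw [ofReal_norm, enorm_eq_nnnorm]
    calc (n : ℝ≥0∞) ≤ ENNReal.ofReal ((N n * c) ^ r) * μ (D n) := hNbig n
      _ = ∫⁻ _ in D n, ENNReal.ofReal ((N n * c) ^ r) ∂μ :=
          (setLIntegral_const (D n) _).symm
      _ ≤ ∫⁻ x in D n, (‖(δ g : ℝ → ℂ) x‖₊ : ℝ≥0∞) ^ r ∂μ := by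
          refine lintegral_mono_ae ?_
          rw [ae_restrict_iff' (hDm n)]
          exact hbd
      _ ≤ ∫⁻ x, (‖(δ g : ℝ → ℂ) x‖₊ : ℝ≥0∞) ^ r ∂μ := setLIntegral_le_lintegral (D n) _
  have htop : ∫⁻ x, (‖(δ g : ℝ → ℂ) x‖₊ : ℝ≥0∞) ^ r ∂μ = ⊤ := by
    by_contra hI'
    obtain ⟨n, hn⟩ := ENNReal.exists_nat_gt hI'
    exact absurd (hI n) (not_le.mpr hn)
  have hlt := Lp.eLpNorm_lt_top (δ g)
  rw [eLpNorm_eq_lintegral_rpow_enorm_toReal hp0 hp] at hlt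
  rw [← hrdef] at hlt
  simp only [enorm_eq_nnnorm] at hlt
  rw [htop, ENNReal.top_rpow_of_pos (by positivity)] at hlt
  exact lt_irrefl _ hlt
end

section
/- Let ℓ∞ = ℓ∞(ℕ, ℂ) be the algebra of bounded complex sequences with pointwise multiplication, and let E ⊆ c₀ be a linear subspace of sequences converging to 0 that is closed under pointwise multiplication by elements of ℓ∞, equipped with a norm ‖·‖_E under which E is a Banach space and which satisfies ‖a · x‖_E ≤ ‖a‖_∞ ‖x‖_E for all a ∈ ℓ∞, x ∈ E. Then every derivation δ : ℓ∞ → E (linear map with δ(ab) = δ(a)·b + a·δ(b) for all a, b ∈ ℓ∞) vanishes identically. -/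
open ENNReal

/-- Let `E ⊆ c₀` be a linear subspace of vanishing complex sequences
(encoded as a normed space `E` with an injective linear embedding `ι` into `ℕ → ℂ` whose
range consists of sequences tending to `0`), closed under pointwise multiplication by
elements of `ℓ∞` and equipped with a Banach norm satisfying `‖a · x‖_E ≤ ‖a‖_∞ ‖x‖_E`.
Then every derivation `δ : ℓ∞ → E` vanishes identically. -/
theorem derivation_linfty_into_banach_ideal_in_c0_vanishes
    (E : Type*) [NormedAddCommGroup E] [NormedSpace ℂ E] [CompleteSpace E]
    (ι : E →ₗ[ℂ] (ℕ → ℂ)) (hinj : Function.Injective ι)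
    (hc0 : ∀ x : E, Filter.Tendsto (ι x) Filter.atTop (nhds 0))
    (hmod : ∀ (a : lp (fun _ : ℕ => ℂ) ∞) (x : E),
      ∃ y : E, ι y = ⇑a * ι x ∧ ‖y‖ ≤ ‖a‖ * ‖x‖)
    (δ : lp (fun _ : ℕ => ℂ) ∞ →ₗ[ℂ] E)
    (hleib : ∀ a b : lp (fun _ : ℕ => ℂ) ∞,
      ι (δ (a * b)) = ι (δ a) * ⇑b + ⇑a * ι (δ b)) :
    ∀ a : lp (fun _ : ℕ => ℂ) ∞, δ a = 0 := by
  intro a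
  -- the indicator of {n}
  set e : ℕ → lp (fun _ : ℕ => ℂ) ∞ := fun n => lp.single ∞ n (1 : ℂ) with he
  have he_apply : ∀ n m, (e n : ℕ → ℂ) m = if m = n then 1 else 0 := by
    intro n m
    by_cases h : m = n
    · subst h; simp [he, lp.single_apply_self]
    · simp [he, lp.single_apply_ne _ _ _ h, h]
  -- e n is idempotent
  have hidem : ∀ n, e n * e n = e n := by
    intro n
    apply lp.ext
    rw [lp.infty_coeFn_mul]
    funext m
    by_cases h : m = n <;> simp [he_apply, h]
  -- δ (e n) = 0
  have hde : ∀ n, δ (e n) = 0 := by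
    intro n
    apply hinj
    have := hleib (e n) (e n)
    rw [hidem n] at this
    rw [map_zero]
    funext m
    have hm := congrFun this m
    simp only [Pi.add_apply, Pi.mul_apply] at hm
    by_cases h : m = n
    · rw [he_apply n m, if_pos h] at hm
      simp only [mul_one, one_mul] at hm
      have : ι (δ (e n)) m = 0 := by linear_combination -hm
      simpa using this
    · rw [he_apply n m, if_neg h] at hm
      simpa using hm
  -- a * e n = a n • e n
  have hmul : ∀ n, a * e n = (a n : ℂ) • e n := by
    intro n
    apply lp.ext
    rw [lp.infty_coeFn_mul, lp.coeFn_smul]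
    funext m
    by_cases h : m = n <;> simp [he_apply, h]
  apply hinj
  rw [map_zero]
  funext n
  have h1 : ι (δ (a * e n)) = ι (δ a) * ⇑(e n) + ⇑a * ι (δ (e n)) := hleib a (e n)
  rw [hmul n, map_smul, hde n, smul_zero, map_zero] at h1
  have hn := congrFun h1 n
  simp only [Pi.add_apply, Pi.mul_apply, Pi.zero_apply, he_apply n n, if_pos rfl,
    mul_one, mul_zero, add_zero] at hn
  simpa using hn.symm
end

section
/- Fix 1 ≤ p < ∞. Every derivation δ : ℓ∞(ℕ, ℂ) → ℓ_p(ℕ, ℂ), i.e., every linear map satisfying δ(ab) = δ(a)·b + a·δ(b) (pointwise products) for all a, b ∈ ℓ∞, vanishes identically. -/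
open ENNReal

/-- Fix `1 ≤ p < ∞`.  Every derivation `δ : ℓ∞ → ℓ_p` (a linear map
satisfying `δ(ab) = δ(a)·b + a·δ(b)` for the pointwise product on bounded sequences)
vanishes identically. -/
theorem derivation_linfty_into_lp_vanishes
    (p : ℝ≥0∞) [Fact (1 ≤ p)] (hp : p ≠ ∞)
    (δ : lp (fun _ : ℕ => ℂ) ∞ →ₗ[ℂ] lp (fun _ : ℕ => ℂ) p)
    (hleib : ∀ a b : lp (fun _ : ℕ => ℂ) ∞,
      ⇑(δ (a * b)) = ⇑(δ a) * ⇑b + ⇑a * ⇑(δ b)) :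
    ∀ a : lp (fun _ : ℕ => ℂ) ∞, δ a = 0 := by
  -- δ 1 = 0
  have h1 : δ 1 = 0 := by
    have := hleib 1 1
    rw [mul_one] at this
    ext n
    have hn := congrFun this n
    simp only [Pi.add_apply, Pi.mul_apply, lp.infty_coeFn_one, Pi.one_apply, one_mul,
      mul_one] at hn
    have h0 : (δ 1 : ℕ → ℂ) n = 0 := by linear_combination -hn
    simpa using h0
  -- δ vanishes on the idempotents `e_n`
  have hsingle : ∀ n : ℕ, δ (lp.single ∞ n (1 : ℂ)) = 0 := by
    intro n
    set e : lp (fun _ : ℕ => ℂ) ∞ := lp.single ∞ n (1 : ℂ) with he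
    have hee : e * e = e := by
      ext m
      rw [lp.infty_coeFn_mul]
      by_cases h : m = n
      · subst h; simp [he, lp.single_apply_self]
      · simp [he, lp.single_apply_ne _ _ _ h, Pi.single_apply, h]
    have key := hleib e e
    rw [hee] at key
    ext m
    have hm := congrFun key m
    simp only [Pi.add_apply, Pi.mul_apply] at hm
    by_cases h : m = n
    · subst h
      have h1' : (e : ℕ → ℂ) m = 1 := lp.single_apply_self _ _ _
      rw [h1'] at hm
      have h0 : (δ e : ℕ → ℂ) m = 0 := by linear_combination -hm
      simpa using h0
    · have hz : (e : ℕ → ℂ) m = 0 := lp.single_apply_ne _ _ _ h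
      rw [hz, mul_zero, zero_mul, add_zero] at hm
      simpa using hm
  intro a
  ext n
  classical
  set e : lp (fun _ : ℕ => ℂ) ∞ := lp.single ∞ n (1 : ℂ) with he
  set c : ℂ := a n with hc
  set b : lp (fun _ : ℕ => ℂ) ∞ := a - c • 1 with hb
  have hbn : (b : ℕ → ℂ) n = 0 := by
    rw [hb, lp.coeFn_sub, Pi.sub_apply, lp.coeFn_smul, Pi.smul_apply, lp.infty_coeFn_one,
      Pi.one_apply, smul_eq_mul, mul_one, hc, sub_self]
  have hab : a = c • 1 + b := by rw [hb]; abel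
  have hδa : δ a = δ b := by
    rw [hab, map_add, map_smul, h1, smul_zero, zero_add]
  -- b = b * (1 - e)
  have hfac : b = b * (1 - e) := by
    ext m
    rw [lp.infty_coeFn_mul]
    by_cases h : m = n
    · subst h
      simp [hbn]
      change _ = (b : ℕ → ℂ) m * _
      rw [hbn, zero_mul]
    · simp [lp.coeFn_sub, lp.infty_coeFn_one, he, lp.single_apply_ne _ _ _ h]
      change _ = (b : ℕ → ℂ) m * (1 - (lp.single ∞ n (1:ℂ) : ℕ → ℂ)) m
      rw [Pi.sub_apply, lp.single_apply_ne _ _ _ h]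
      simp
  have key := hleib b (1 - e)
  rw [← hfac] at key
  have hδe : δ (1 - e) = 0 := by rw [map_sub, h1, hsingle n, sub_zero]
  have hn := congrFun key n
  rw [hδe] at hn
  simp only [Pi.add_apply, Pi.mul_apply, lp.coeFn_zero, Pi.zero_apply, mul_zero,
    add_zero, lp.coeFn_sub, Pi.sub_apply, lp.infty_coeFn_one, Pi.one_apply] at hn
  rw [show (e : ℕ → ℂ) n = 1 from lp.single_apply_self _ _ _, sub_self, mul_zero] at hn
  rw [hδa]
  simpa using hn
end

section
/- Let H be a complex Hilbert space and let E be a two-sided ideal of B(H) consisting of compact operators, equipped with a norm ‖·‖_E under which E is a Banach space, satisfying ‖a x b‖_E ≤ ‖a‖ ‖x‖_E ‖b‖ for all x ∈ E, a, b ∈ B(H), and suppose E is reflexive as a Banach space. Then every derivation δ : B(H) → E (linear, δ(xy) = δ(x)y + xδ(y) for all x, y ∈ B(H), with no continuity assumption) is inner: there exists d ∈ E such that δ(x) = d x − x d for all x ∈ B(H). -/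
open NormedSpace Filter Topology Submodule
set_option linter.unusedSectionVars false
set_option maxHeartbeats 1000000
noncomputable section
namespace DerivInnerAux
variable {H : Type*} [NormedAddCommGroup H] [InnerProductSpace ℂ H] [CompleteSpace H]
local notation "⟪" x ", " y "⟫" => @inner ℂ _ _ x y

def rk (η μ : H) : H →L[ℂ] H := (innerSL ℂ μ).smulRight η
@[simp] lemma rk_apply (η μ ζ : H) : rk η μ ζ = ⟪μ, ζ⟫ • η := rfl
lemma norm_rk (η μ : H) : ‖rk η μ‖ = ‖μ‖ * ‖η‖ := by
  rw [rk, ContinuousLinearMap.norm_smulRight_apply, innerSL_apply_norm]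

lemma norm_sum_smul_le {m : ℕ} {f : Fin m → H} (hf : Orthonormal ℂ f)
    {b : Fin m → H} (hb : Orthonormal ℂ b) (ζ : H) :
    ‖∑ i, ⟪b i, ζ⟫ • f i‖ ≤ ‖ζ‖ := by
  set l : Fin m → ℂ := fun i => ⟪b i, ζ⟫ with hl
  set x : H := ∑ i, l i • f i with hx
  have h1 : ⟪x, x⟫ = ((∑ i, ‖l i‖ ^ 2 : ℝ) : ℂ) := by
    rw [hx, inner_sum]
    push_cast
    refine Finset.sum_congr rfl fun i _ => ?_
    rw [inner_smul_right, hf.inner_left_fintype l i, mul_comm, RCLike.conj_mul]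
    norm_cast
  rw [inner_self_eq_norm_sq_to_K] at h1
  have h3 : ‖x‖ ^ 2 = ∑ i, ‖l i‖ ^ 2 := by
    have h2 := congrArg Complex.re h1
    simpa [← Complex.ofReal_pow] using h2
  have h4 : ∑ i, ‖l i‖ ^ 2 ≤ ‖ζ‖ ^ 2 := hb.sum_inner_products_le ζ
  have h5 : ‖x‖ ^ 2 ≤ ‖ζ‖ ^ 2 := by rw [h3]; exact h4
  calc ‖x‖ = Real.sqrt (‖x‖ ^ 2) := (Real.sqrt_sq (norm_nonneg _)).symm
    _ ≤ Real.sqrt (‖ζ‖ ^ 2) := Real.sqrt_le_sqrt h5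
    _ = ‖ζ‖ := Real.sqrt_sq (norm_nonneg _)

lemma orthonormal_inner_tendsto_zero {g : ℕ → H} (hg : Orthonormal ℂ g) (u : H) :
    Tendsto (fun k => ⟪u, g k⟫) atTop (𝓝 0) := by
  have hsumm : Summable fun k => ‖⟪g k, u⟫‖ ^ 2 := hg.inner_products_summable u
  have h1 : Tendsto (fun k => ‖⟪g k, u⟫‖ ^ 2) atTop (𝓝 0) := hsumm.tendsto_atTop_zero
  have h2 : Tendsto (fun k => ‖⟪u, g k⟫‖) atTop (𝓝 0) := by
    have h2' := (Real.continuous_sqrt.tendsto 0).comp h1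
    rw [Real.sqrt_zero] at h2'
    exact h2'.congr fun k => by
      simp only [Function.comp_apply]
      rw [Real.sqrt_sq (norm_nonneg _), norm_inner_symm]
  exact tendsto_zero_iff_norm_tendsto_zero.mpr h2

lemma corner_small (S : H →L[ℂ] H) {g : ℕ → H} (hg : Orthonormal ℂ g)
    (hdiag : Tendsto (fun k => ⟪g k, S (g k)⟫) atTop (𝓝 0))
    {τ : ℝ} (hτ : 0 < τ) (n : ℕ) :
    ∃ e : Fin n → H, Orthonormal ℂ e ∧ ∀ i j, ‖⟪e i, S (e j)⟫‖ ≤ τ := by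
  suffices h : ∃ k : Fin n → ℕ, Function.Injective k ∧
      ∀ i j, ‖⟪g (k i), S (g (k j))⟫‖ ≤ τ by
    obtain ⟨k, hki, hkb⟩ := h
    exact ⟨g ∘ k, hg.comp k hki, hkb⟩
  induction n with
  | zero => exact ⟨fun i => i.elim0, fun i => i.elim0, fun i => i.elim0⟩
  | succ n ih =>
    obtain ⟨k, hki, hkb⟩ := ih
    have hA : ∀ᶠ K in atTop, ∀ i, k i < K := by
      rw [eventually_all]; exact fun i => eventually_gt_atTop _
    have hB : ∀ᶠ K in atTop, ‖⟪g K, S (g K)⟫‖ < τ := by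
      have := hdiag.norm
      simp only [norm_zero] at this
      exact this.eventually_lt_const hτ
    have hC : ∀ᶠ K in atTop, ∀ i, ‖⟪g (k i), S (g K)⟫‖ < τ := by
      rw [eventually_all]
      intro i
      have ht : Tendsto (fun K => ⟪g (k i), S (g K)⟫) atTop (𝓝 0) := by
        have heq : (fun K => ⟪g (k i), S (g K)⟫)
            = fun K => ⟪ContinuousLinearMap.adjoint S (g (k i)), g K⟫ := by
          funext K; rw [ContinuousLinearMap.adjoint_inner_left]
        rw [heq]; exact orthonormal_inner_tendsto_zero hg _
      have := ht.norm
      simp only [norm_zero] at this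
      exact this.eventually_lt_const hτ
    have hD : ∀ᶠ K in atTop, ∀ i, ‖⟪g K, S (g (k i))⟫‖ < τ := by
      rw [eventually_all]
      intro i
      have ht : Tendsto (fun K => ⟪S (g (k i)), g K⟫) atTop (𝓝 0) :=
        orthonormal_inner_tendsto_zero hg _
      have := ht.norm
      simp only [norm_zero] at this
      filter_upwards [this.eventually_lt_const hτ] with K hK
      rwa [norm_inner_symm]
    obtain ⟨K, hK1, hK2, hK3, hK4⟩ := (hA.and (hB.and (hC.and hD))).exists
    refine ⟨Fin.cons K k, ?_, ?_⟩
    · intro a b hab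
      cases a using Fin.cases with
      | zero =>
        cases b using Fin.cases with
        | zero => rfl
        | succ b' =>
          simp only [Fin.cons_zero, Fin.cons_succ] at hab
          exact absurd hab.symm (hK1 b').ne
      | succ a' =>
        cases b using Fin.cases with
        | zero =>
          simp only [Fin.cons_zero, Fin.cons_succ] at hab
          exact absurd hab (hK1 a').ne
        | succ b' =>
          simp only [Fin.cons_succ] at hab
          exact congrArg Fin.succ (hki hab)
    · intro i j
      cases i using Fin.cases with
      | zero =>
        cases j using Fin.cases with
        | zero => simpa using hK2.le
        | succ j' => simpa using (hK4 j').le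
      | succ i' =>
        cases j using Fin.cases with
        | zero => simpa using (hK3 i').le
        | succ j' => simpa using hkb i' j'

lemma exists_preimage_of_corner
    {E : Type*} [NormedAddCommGroup E] [NormedSpace ℂ E]
    (ι : E →ₗ[ℂ] (H →L[ℂ] H))
    (hideal : ∀ (a b : H →L[ℂ] H) (x : E),
      ∃ y : E, ι y = a * ι x * b ∧ ‖y‖ ≤ ‖a‖ * ‖x‖ * ‖b‖)
    (hrefl : Function.Surjective (inclusionInDoubleDual ℂ E))
    (ιL : E →L[ℂ] (H →L[ℂ] H)) (hιL : ∀ x, ιL x = ι x)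
    (S : H →L[ℂ] H) (Mc c₀ : ℝ) (hMc : 0 ≤ Mc) (hc₀ : 0 ≤ c₀)
    (hM : ∀ x : H →L[ℂ] H, ∃ y : E, ι y = S * x - x * S ∧ ‖y‖ ≤ Mc * ‖x‖)
    (hrk : ∀ η μ : H, ∃ r : E, ι r = rk η μ ∧ ‖r‖ ≤ c₀ * (‖η‖ * ‖μ‖))
    (corner : ∀ τ : ℝ, 0 < τ → ∀ m : ℕ, ∃ e : Fin m → H, Orthonormal ℂ e ∧
       ∀ i j, ‖⟪e i, S (e j)⟫‖ ≤ τ)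
    (w : Set H) (hw : Orthonormal ℂ (((↑) : w → H)))
    (hdense : Dense ((Submodule.span ℂ w : Submodule ℂ H) : Set H)) :
    ∃ d : E, ι d = S := by
  classical
  set q : Finset w → (H →L[ℂ] H) := fun F => ∑ x ∈ F, rk (x : H) (x : H) with hqdef
  have hq_mem : ∀ (F : Finset w) (b : w), b ∈ F → q F (b : H) = (b : H) := by
    intro F b hbF
    have hite : ∀ x : w, ⟪(x : H), (b : H)⟫ = if x = b then 1 else 0 :=
      fun x => orthonormal_iff_ite.mp hw x b
    simp only [hqdef, ContinuousLinearMap.sum_apply, rk_apply]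
    rw [Finset.sum_congr rfl (fun x _ => by rw [hite x])]
    simp [Finset.sum_ite_eq' F b, hbF]
  have hmain : ∀ F : Finset w, ∃ cF : E, ι cF = S * q F ∧ ‖cF‖ ≤ 4 * Mc + 1 := by
    intro F
    set n := F.card with hn
    set jw : Fin n → w := fun i => ((F.equivFin.symm i : {x : w // x ∈ F}) : w) with hjw
    have hjw_inj : Function.Injective jw := by
      intro a b hab
      exact F.equivFin.symm.injective (Subtype.ext hab)
    set bb : Fin n → H := fun i => ((jw i : w) : H) with hbbdef
    have hbb : Orthonormal ℂ bb := hw.comp jw hjw_inj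
    have hqF : q F = ∑ i, rk (bb i) (bb i) := by
      rw [hqdef]
      dsimp only
      rw [← Finset.sum_attach F (fun x => rk (x : H) (x : H)), ← Finset.univ_eq_attach]
      exact (Equiv.sum_comp F.equivFin.symm
        (fun x : {x : w // x ∈ F} => rk ((x : w) : H) ((x : w) : H))).symm
    obtain ⟨e, he, hee⟩ := corner (1 / ((n : ℝ)^2 * c₀ + 1)) (by positivity) n
    set v : H →L[ℂ] H := ∑ i, rk (e i) (bb i) with hvdef
    set vs : H →L[ℂ] H := ∑ i, rk (bb i) (e i) with hvsdef
    set q' : H →L[ℂ] H := ∑ i, rk (e i) (e i) with hq'def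
    have happ : ∀ (a b : Fin n → H) (ζ : H),
        (∑ i, rk (a i) (b i)) ζ = ∑ i, ⟪b i, ζ⟫ • a i := by
      intro a b ζ; simp [ContinuousLinearMap.sum_apply]
    have hqapp : ∀ ζ, q F ζ = ∑ i, ⟪bb i, ζ⟫ • bb i := fun ζ => by
      rw [hqF]; exact happ _ _ ζ
    have hvapp : ∀ ζ, v ζ = ∑ i, ⟪bb i, ζ⟫ • e i := fun ζ => happ _ _ ζ
    have hvsapp : ∀ ζ, vs ζ = ∑ i, ⟪e i, ζ⟫ • bb i := fun ζ => happ _ _ ζ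
    have hq'app : ∀ ζ, q' ζ = ∑ i, ⟪e i, ζ⟫ • e i := fun ζ => happ _ _ ζ
    -- algebraic relations
    have hvsv : vs * v = q F := by
      ext ζ
      rw [ContinuousLinearMap.mul_apply, hvsapp, hqapp]
      refine Finset.sum_congr rfl fun i _ => ?_
      rw [hvapp, he.inner_right_fintype]
    have hvq : v * q F = v := by
      ext ζ
      rw [ContinuousLinearMap.mul_apply, hvapp, hvapp]
      refine Finset.sum_congr rfl fun i _ => ?_
      rw [hqapp, hbb.inner_right_fintype]
    have hqq : q F * q F = q F := by
      ext ζ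
      rw [ContinuousLinearMap.mul_apply, hqapp, hqapp]
      refine Finset.sum_congr rfl fun i _ => ?_
      rw [hbb.inner_right_fintype]
    have hq'v : q' * v = v := by
      ext ζ
      rw [ContinuousLinearMap.mul_apply, hq'app, hvapp]
      refine Finset.sum_congr rfl fun i _ => ?_
      rw [he.inner_right_fintype]
    have hvsq' : vs * q' = vs := by
      ext ζ
      rw [ContinuousLinearMap.mul_apply, hvsapp, hvsapp]
      refine Finset.sum_congr rfl fun i _ => ?_
      rw [hq'app, he.inner_right_fintype]
    -- norms
    have hnv : ‖v‖ ≤ 1 := by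
      refine ContinuousLinearMap.opNorm_le_bound _ zero_le_one (fun ζ => ?_)
      rw [one_mul, hvapp]; exact norm_sum_smul_le he hbb ζ
    have hnvs : ‖vs‖ ≤ 1 := by
      refine ContinuousLinearMap.opNorm_le_bound _ zero_le_one (fun ζ => ?_)
      rw [one_mul, hvsapp]; exact norm_sum_smul_le hbb he ζ
    have hnq : ‖q F‖ ≤ 1 := by
      refine ContinuousLinearMap.opNorm_le_bound _ zero_le_one (fun ζ => ?_)
      rw [one_mul, hqapp]; exact norm_sum_smul_le hbb hbb ζ
    have hn1q : ‖(1 : H →L[ℂ] H) - q F‖ ≤ 2 := by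
      calc ‖(1 : H →L[ℂ] H) - q F‖ ≤ ‖(1 : H →L[ℂ] H)‖ + ‖q F‖ := norm_sub_le _ _
        _ ≤ 1 + 1 := by
            refine add_le_add ?_ hnq
            rw [ContinuousLinearMap.one_def]; exact ContinuousLinearMap.norm_id_le
        _ = 2 := by norm_num
    -- the compressed corner as an element of E
    choose r hr hrn using fun i j => hrk (e i) (e j)
    set z : E := ∑ i, ∑ j, ⟪e i, S (e j)⟫ • r i j with hzdef
    have hz1 : ι z = q' * S * q' := by
      have hιz : ι z = ∑ i, ∑ j, ⟪e i, S (e j)⟫ • rk (e i) (e j) := by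
        rw [hzdef, map_sum]
        refine Finset.sum_congr rfl fun i _ => ?_
        rw [map_sum]
        refine Finset.sum_congr rfl fun j _ => ?_
        rw [map_smul, hr]
      rw [hιz]
      ext ζ
      have hS : S (q' ζ) = ∑ j, ⟪e j, ζ⟫ • S (e j) := by
        rw [hq'app, map_sum]
        exact Finset.sum_congr rfl fun j _ => by rw [map_smul]
      rw [ContinuousLinearMap.mul_apply, ContinuousLinearMap.mul_apply, hS, hq'app]
      rw [ContinuousLinearMap.sum_apply]
      refine Finset.sum_congr rfl fun i _ => ?_
      rw [ContinuousLinearMap.sum_apply, inner_sum, Finset.sum_smul]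
      refine Finset.sum_congr rfl fun j _ => ?_
      simp only [ContinuousLinearMap.smul_apply, rk_apply, inner_smul_right, smul_smul]
      rw [mul_comm]
    have hzn : ‖z‖ ≤ 1 := by
      have hterm : ∀ i j : Fin n, ‖⟪e i, S (e j)⟫ • r i j‖ ≤ (1 / ((n : ℝ)^2 * c₀ + 1)) * c₀ := by
        intro i j
        rw [norm_smul]
        have h1 : ‖⟪e i, S (e j)⟫‖ ≤ 1 / ((n : ℝ)^2 * c₀ + 1) := hee i j
        have h2 : ‖r i j‖ ≤ c₀ := by
          have := hrn i j
          rwa [he.1 i, he.1 j, one_mul, mul_one] at this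
        exact mul_le_mul h1 h2 (norm_nonneg _) (by positivity)
      calc ‖z‖ ≤ ∑ i, ‖∑ j, ⟪e i, S (e j)⟫ • r i j‖ := norm_sum_le _ _
        _ ≤ ∑ i : Fin n, ∑ j : Fin n, ‖⟪e i, S (e j)⟫ • r i j‖ :=
            Finset.sum_le_sum fun i _ => norm_sum_le _ _
        _ ≤ ∑ _i : Fin n, ∑ _j : Fin n, (1 / ((n : ℝ)^2 * c₀ + 1)) * c₀ :=
            Finset.sum_le_sum fun i _ => Finset.sum_le_sum fun j _ => hterm i j
        _ = (n : ℝ)^2 * ((1 / ((n : ℝ)^2 * c₀ + 1)) * c₀) := by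
            simp [Finset.sum_const, Finset.card_univ]; ring
        _ ≤ 1 := by
            rw [mul_comm (1 / ((n : ℝ)^2 * c₀ + 1)) c₀, ← mul_assoc, mul_one_div]
            exact div_le_one_of_le₀ (by nlinarith) (by positivity)
    -- the E-elements
    obtain ⟨yq, hyq, hyqn⟩ := hM (q F)
    obtain ⟨yv, hyv, hyvn⟩ := hM v
    obtain ⟨ya, hya, hyan⟩ := hideal vs v z
    obtain ⟨yb, hyb, hybn⟩ := hideal vs (q F) yv
    obtain ⟨yc, hyc, hycn⟩ := hideal (q F) (1 - q F) yq
    refine ⟨yq + ya - yb - yc, ?_, ?_⟩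
    · rw [map_sub, map_sub, map_add, hyc, hyb, hya, hyq, hyv, hz1]
      -- purely algebraic identity
      have e1 : vs * (q' * S * q') * v = vs * (S * v) := by
        rw [mul_assoc vs (q' * S * q') v, mul_assoc (q' * S) q' v, hq'v,
          mul_assoc q' S v, ← mul_assoc vs q' (S * v), hvsq']
      have e2 : vs * (S * v - v * S) * q F = vs * (S * v) - q F * (S * q F) := by
        rw [mul_sub, sub_mul]
        congr 1
        · rw [mul_assoc vs (S * v) (q F), mul_assoc S v (q F), hvq]
        · rw [mul_assoc vs (v * S) (q F), mul_assoc v S (q F),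
            ← mul_assoc vs v (S * q F), hvsv]
      have e3 : q F * (S * q F - q F * S) * (1 - q F) = q F * (S * q F) - q F * S := by
        have h1 : q F * (q F * S) = q F * S := by rw [← mul_assoc, hqq]
        have h2 : q F * (S * q F) * q F = q F * (S * q F) := by
          rw [mul_assoc (q F) (S * q F) (q F), mul_assoc S (q F) (q F), hqq]
        rw [mul_sub (q F) (S * q F) (q F * S), h1, mul_one_sub, sub_mul, h2,
          mul_assoc (q F) S (q F)]
        abel
      rw [e1, e2, e3]
      abel
    · have hyan' : ‖ya‖ ≤ 1 := by
        calc ‖ya‖ ≤ ‖vs‖ * ‖z‖ * ‖v‖ := hyan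
          _ ≤ 1 * 1 * 1 := by
              refine mul_le_mul (mul_le_mul hnvs hzn (norm_nonneg _) ?_) hnv (norm_nonneg _) ?_
              all_goals positivity
          _ = 1 := by norm_num
      have hyqn' : ‖yq‖ ≤ Mc := by
        calc ‖yq‖ ≤ Mc * ‖q F‖ := hyqn
          _ ≤ Mc * 1 := by exact mul_le_mul_of_nonneg_left hnq hMc
          _ = Mc := mul_one Mc
      have hyvn' : ‖yv‖ ≤ Mc := by
        calc ‖yv‖ ≤ Mc * ‖v‖ := hyvn
          _ ≤ Mc * 1 := mul_le_mul_of_nonneg_left hnv hMc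
          _ = Mc := mul_one Mc
      have hybn' : ‖yb‖ ≤ Mc := by
        calc ‖yb‖ ≤ ‖vs‖ * ‖yv‖ * ‖q F‖ := hybn
          _ ≤ 1 * Mc * 1 := by
              refine mul_le_mul (mul_le_mul hnvs hyvn' (norm_nonneg _) ?_) hnq
                (norm_nonneg _) ?_
              all_goals positivity
          _ = Mc := by ring
      have hycn' : ‖yc‖ ≤ 2 * Mc := by
        calc ‖yc‖ ≤ ‖q F‖ * ‖yq‖ * ‖(1 : H →L[ℂ] H) - q F‖ := hycn
          _ ≤ 1 * Mc * 2 := by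
              refine mul_le_mul (mul_le_mul hnq hyqn' (norm_nonneg _) ?_) hn1q
                (norm_nonneg _) ?_
              all_goals positivity
          _ = 2 * Mc := by ring
      calc ‖yq + ya - yb - yc‖ ≤ ‖yq + ya - yb‖ + ‖yc‖ := norm_sub_le _ _
        _ ≤ ‖yq + ya‖ + ‖yb‖ + ‖yc‖ := by
            have := norm_sub_le (yq + ya) yb
            linarith [norm_sub_le (yq + ya) yb]
        _ ≤ ‖yq‖ + ‖ya‖ + ‖yb‖ + ‖yc‖ := by linarith [norm_add_le yq ya]
        _ ≤ Mc + 1 + Mc + 2 * Mc := by linarith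
        _ = 4 * Mc + 1 := by ring
  -- pass to the weak cluster point
  choose c hc1 hc2 using hmain
  set J := inclusionInDoubleDual ℂ E with hJ
  set u : Finset w → WeakDual ℂ (StrongDual ℂ E) := fun F => StrongDual.toWeakDual (J (c F)) with hu
  have hball : ∀ F, u F ∈ WeakDual.toStrongDual ⁻¹' Metric.closedBall 0 (4 * Mc + 1) := by
    intro F
    simp only [Set.mem_preimage, Metric.mem_closedBall, dist_zero_right]
    refine (le_of_eq (dist_zero_right (WeakDual.toStrongDual (u F)))).trans ?_
    calc ‖WeakDual.toStrongDual (u F)‖ = ‖J (c F)‖ := rfl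
      _ ≤ ‖c F‖ := double_dual_bound ℂ E (c F)
      _ ≤ 4 * Mc + 1 := hc2 F
  have hcpt := WeakDual.isCompact_closedBall (𝕜 := ℂ) (E := StrongDual ℂ E) 0 (4 * Mc + 1)
  have hle : Filter.map u atTop ≤
      𝓟 (WeakDual.toStrongDual ⁻¹' Metric.closedBall 0 (4 * Mc + 1)) := by
    rw [le_principal_iff, Filter.mem_map]
    exact Filter.univ_mem' hball
  obtain ⟨Φ, hΦmem, hΦ⟩ := hcpt.exists_clusterPt hle
  obtain ⟨d, hd⟩ := hrefl (WeakDual.toStrongDual Φ)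
  refine ⟨d, ?_⟩
  have hkey : ∀ (b : w) (η : H), ⟪η, ι d (b : H)⟫ = ⟪η, S (b : H)⟫ := by
    intro b η
    set φ : StrongDual ℂ E :=
      (innerSL ℂ η).comp (((ContinuousLinearMap.apply ℂ H (b : H)) :
        (H →L[ℂ] H) →L[ℂ] H).comp ιL) with hφ
    have hφc : ∀ x : E, φ x = ⟪η, ι x (b : H)⟫ := by
      intro x
      simp [hφ, hιL]
    have hclu : ClusterPt (Φ φ) (Filter.map (fun F => φ (c F)) atTop) := by
      have hcont : ContinuousAt (fun Ψ : WeakDual ℂ (StrongDual ℂ E) => Ψ φ) Φ :=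
        (WeakDual.eval_continuous φ).continuousAt
      have htf : Tendsto (fun Ψ : WeakDual ℂ (StrongDual ℂ E) => Ψ φ) (Filter.map u atTop)
          (Filter.map (fun F => φ (c F)) atTop) := by
        have hmm : Filter.map (fun Ψ : WeakDual ℂ (StrongDual ℂ E) => Ψ φ) (Filter.map u atTop)
            = Filter.map (fun F => φ (c F)) atTop := by
          rw [Filter.map_map]
          congr 1
        exact hmm.le
      exact hΦ.map hcont htf
    have htend : Tendsto (fun F => φ (c F)) atTop (𝓝 (⟪η, S (b : H)⟫)) := by
      have hev : ∀ᶠ F in (atTop : Filter (Finset w)), φ (c F) = ⟪η, S (b : H)⟫ := by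
        filter_upwards [Filter.eventually_ge_atTop ({b} : Finset w)] with F hF
        have hbF : b ∈ F := Finset.singleton_subset_iff.mp hF
        rw [hφc, hc1, ContinuousLinearMap.mul_apply, hq_mem F b hbF]
      exact Filter.Tendsto.congr' (hev.mono fun F h => h.symm) tendsto_const_nhds
    have hΦφ : Φ φ = ⟪η, S (b : H)⟫ := by
      refine eq_of_nhds_neBot (Filter.NeBot.mono hclu ?_)
      exact inf_le_inf_left _ htend
    calc ⟪η, ι d (b : H)⟫ = φ d := (hφc d).symm
      _ = J d φ := by rw [hJ, dual_def]
      _ = Φ φ := by rw [hd]; rfl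
      _ = ⟪η, S (b : H)⟫ := hΦφ
  have hext : Set.EqOn (ιL d) S w := by
    intro x hx
    rw [hιL]
    exact ext_inner_left ℂ (fun η => hkey ⟨x, hx⟩ η)
  have : ιL d = S := ContinuousLinearMap.ext_on hdense hext
  rw [← hιL]; exact this

end DerivInnerAux

open DerivInnerAux

/-- Let `H` be a complex Hilbert space and `E` a two-sided ideal of `B(H)`
consisting of compact operators (encoded via an injective linear embedding `ι`), with a Banach
norm satisfying the bimodule inequality, and suppose `E` is reflexive as a Banach space.
Then every derivation `δ : B(H) → E` (with no continuity assumption) is inner: there exists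
`d ∈ E` with `δ(x) = d x - x d` for all `x ∈ B(H)`. -/
theorem derivation_BH_into_reflexive_ideal_inner
    {H : Type*} [NormedAddCommGroup H] [InnerProductSpace ℂ H] [CompleteSpace H]
    (E : Type*) [NormedAddCommGroup E] [NormedSpace ℂ E] [CompleteSpace E]
    (ι : E →ₗ[ℂ] (H →L[ℂ] H)) (hinj : Function.Injective ι)
    (hcompact : ∀ x : E, IsCompactOperator (ι x))
    (hideal : ∀ (a b : H →L[ℂ] H) (x : E),
      ∃ y : E, ι y = a * ι x * b ∧ ‖y‖ ≤ ‖a‖ * ‖x‖ * ‖b‖)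
    (hrefl : Function.Surjective (inclusionInDoubleDual ℂ E))
    (δ : (H →L[ℂ] H) →ₗ[ℂ] E)
    (hleib : ∀ x y : H →L[ℂ] H,
      ι (δ (x * y)) = ι (δ x) * y + x * ι (δ y)) :
    ∃ d : E, ∀ x : H →L[ℂ] H, ι (δ x) = ι d * x - x * ι d := by
  classical
  by_cases hδ0 : ∀ x, δ x = 0
  · exact ⟨0, fun x => by simp [hδ0 x]⟩
  push_neg at hδ0
  obtain ⟨xh, hxh⟩ := hδ0
  set x₀ : E := δ xh with hx₀def
  have hx₀ : ι x₀ ≠ 0 := fun h => hxh (hinj (by rw [h, map_zero]))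
  obtain ⟨α', hα'⟩ : ∃ α', ι x₀ α' ≠ 0 := by
    by_contra h
    push_neg at h
    exact hx₀ (ContinuousLinearMap.ext fun a => by simp [h a])
  have hα'0 : α' ≠ 0 := fun h => hα' (by rw [h, map_zero])
  set α : H := ((‖α'‖⁻¹ : ℝ) : ℂ) • α' with hαdef
  have hαnorm : ‖α‖ = 1 := by
    rw [hαdef, norm_smul, Complex.norm_real, Real.norm_eq_abs,
      abs_of_nonneg (by positivity), inv_mul_cancel₀ (norm_ne_zero_iff.mpr hα'0)]
  have hα : ι x₀ α ≠ 0 := by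
    rw [hαdef, map_smul]
    simp only [ne_eq, smul_eq_zero, not_or]
    constructor
    · exact_mod_cast (inv_pos.mpr (norm_pos_iff.mpr hα'0)).ne'
    · exact hα'
  set β : H := ((‖ι x₀ α‖⁻¹ : ℝ) : ℂ) • (ι x₀ α) with hβdef
  have hβnorm : ‖β‖ = 1 := by
    rw [hβdef, norm_smul, Complex.norm_real, Real.norm_eq_abs,
      abs_of_nonneg (by positivity), inv_mul_cancel₀ (norm_ne_zero_iff.mpr hα)]
  have hβ0 : β ≠ 0 := by
    intro h; rw [h, norm_zero] at hβnorm; norm_num at hβnorm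
  set t : ℂ := @inner ℂ _ _ β (ι x₀ α) with htdef
  have ht : t = (‖ι x₀ α‖ : ℂ) := by
    rw [htdef, hβdef, inner_smul_left, inner_self_eq_norm_sq_to_K]
    rw [Complex.conj_ofReal, pow_two]
    rw [← mul_assoc]
    have h1 : ((‖ι x₀ α‖⁻¹ : ℝ) : ℂ) * (‖ι x₀ α‖ : ℂ) = 1 := by
      rw [← Complex.ofReal_mul, inv_mul_cancel₀ (norm_ne_zero_iff.mpr hα), Complex.ofReal_one]
    exact (congrArg (· * (‖ι x₀ α‖ : ℂ)) h1).trans (one_mul _)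
  have ht0 : t ≠ 0 := by
    rw [ht]
    exact_mod_cast norm_ne_zero_iff.mpr hα
  have hnt : ‖t‖ = ‖ι x₀ α‖ := by
    rw [ht, Complex.norm_real, Real.norm_eq_abs, abs_of_nonneg (norm_nonneg _)]
  -- rank-one elements of E
  set c₀ : ℝ := ‖ι x₀ α‖⁻¹ * ‖x₀‖ with hc₀def
  have hc₀ : 0 ≤ c₀ := by positivity
  have hrk' : ∀ η μ : H, ∃ r : E, ι r = rk η μ ∧ ‖r‖ ≤ c₀ * (‖η‖ * ‖μ‖) := by
    intro η μ
    obtain ⟨y, hy1, hy2⟩ := hideal (t⁻¹ • rk η β) (rk α μ) x₀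
    refine ⟨y, ?_, ?_⟩
    · rw [hy1]
      ext ζ
      simp only [ContinuousLinearMap.mul_apply, ContinuousLinearMap.smul_apply, rk_apply,
        map_smul]
      rw [smul_comm, ← htdef, smul_smul, smul_smul]
      congr 1
      field_simp
    · refine le_trans hy2 ?_
      have h1 : ‖t⁻¹ • rk η β‖ = ‖ι x₀ α‖⁻¹ * ‖η‖ := by
        rw [norm_smul, norm_rk, hβnorm, one_mul, norm_inv, hnt]
      have h2 : ‖rk α μ‖ = ‖μ‖ := by rw [norm_rk, hαnorm, mul_one]
      rw [h1, h2, hc₀def]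
      exact le_of_eq (by ring)
  obtain ⟨z₁, hz₁, _⟩ := hrk' β α
  have hαα : @inner ℂ _ _ α α = 1 := by
    rw [inner_self_eq_norm_sq_to_K, hαnorm]; norm_num
  have hz₁0 : z₁ ≠ 0 := by
    intro h
    apply hβ0
    have h2 : rk β α α = 0 := by rw [← hz₁, h, map_zero]; rfl
    rw [rk_apply, hαα, one_smul] at h2
    exact h2
  set c₁ : ℝ := ‖z₁‖ with hc₁def
  have hc₁ : 0 < c₁ := norm_pos_iff.mpr hz₁0
  have hlow : ∀ (x : E) (η μ : H), ‖@inner ℂ _ _ η (ι x μ)‖ * c₁ ≤ ‖η‖ * ‖x‖ * ‖μ‖ := by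
    intro x η μ
    obtain ⟨y, hy1, hy2⟩ := hideal (rk β η) (rk μ α) x
    have hyz : y = @inner ℂ _ _ η (ι x μ) • z₁ := by
      apply hinj
      rw [hy1, map_smul, hz₁]
      ext ζ
      simp only [ContinuousLinearMap.mul_apply, rk_apply, map_smul,
        ContinuousLinearMap.smul_apply]
      rw [smul_comm]
    have hn : ‖y‖ = ‖@inner ℂ _ _ η (ι x μ)‖ * c₁ := by
      rw [hyz, norm_smul, hc₁def]
    rw [← hn]
    refine le_trans hy2 ?_
    rw [norm_rk, norm_rk, hβnorm, hαnorm]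
    exact le_of_eq (by ring)
  have hιb : ∀ x : E, ‖ι x‖ ≤ c₁⁻¹ * ‖x‖ := by
    intro x
    refine ContinuousLinearMap.opNorm_le_bound _ (by positivity) (fun μ => ?_)
    rcases eq_or_ne (ι x μ) 0 with h | h
    · rw [h, norm_zero]; positivity
    · have hthis := hlow x (ι x μ) μ
      have hsq : ‖@inner ℂ _ _ (ι x μ) (ι x μ)‖ = ‖ι x μ‖ * ‖ι x μ‖ := by
        rw [@inner_self_eq_norm_sq_to_K ℂ, norm_pow, RCLike.norm_ofReal,
          abs_of_nonneg (norm_nonneg _), pow_two]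
      rw [hsq] at hthis
      have hpos : 0 < ‖ι x μ‖ := norm_pos_iff.mpr h
      have h2 : ‖ι x μ‖ * c₁ ≤ ‖x‖ * ‖μ‖ := by nlinarith
      calc ‖ι x μ‖ = (‖ι x μ‖ * c₁) * c₁⁻¹ := by field_simp
        _ ≤ (‖x‖ * ‖μ‖) * c₁⁻¹ := mul_le_mul_of_nonneg_right h2 (by positivity)
        _ = c₁⁻¹ * ‖x‖ * ‖μ‖ := by ring
  set ιL : E →L[ℂ] (H →L[ℂ] H) := LinearMap.mkContinuous ι c₁⁻¹ hιb with hιLdef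
  have hιL : ∀ x : E, ιL x = ι x := fun x => rfl
  -- the implementing operator T
  set Tlin : H →ₗ[ℂ] H :=
    { toFun := fun η => ι (δ (rk η α)) α
      map_add' := by
        intro η η'
        have hr : rk (η + η') α = rk η α + rk η' α := by
          ext ζ; simp [smul_add]
        show ι (δ (rk (η + η') α)) α = ι (δ (rk η α)) α + ι (δ (rk η' α)) α
        rw [hr, map_add, map_add, ContinuousLinearMap.add_apply]
      map_smul' := by
        intro m η
        have hr : rk (m • η) α = m • rk η α := by
          ext ζ; simp [smul_comm _ m]
        show ι (δ (rk (m • η) α)) α = m • ι (δ (rk η α)) α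
        rw [hr, map_smul δ m (rk η α), map_smul ι m (δ (rk η α))]
        rfl } with hTlindef
  have hTlin : ∀ η, Tlin η = ι (δ (rk η α)) α := fun η => rfl
  have hId : ∀ (x : H →L[ℂ] H) (η : H), ι (δ x) η = Tlin (x η) - x (Tlin η) := by
    intro x η
    have h := hleib x (rk η α)
    have hxr : x * rk η α = rk (x η) α := by
      ext ζ; simp [ContinuousLinearMap.mul_apply]
    rw [hxr] at h
    have h2 := congrArg (fun A : H →L[ℂ] H => A α) h
    simp only [ContinuousLinearMap.add_apply, ContinuousLinearMap.mul_apply] at h2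
    rw [rk_apply, hαα, one_smul] at h2
    -- h2 : ι (δ (rk (x η) α)) α = ι (δ x) η + x (ι (δ (rk η α)) α)
    rw [hTlin, hTlin, h2]
    abel
  have hweak : ∀ μ : H, Continuous fun η => @inner ℂ _ _ μ (Tlin η) := by
    intro μ
    have hform : ∀ η, @inner ℂ _ _ μ (Tlin η) =
        @inner ℂ _ _ μ η * @inner ℂ _ _ α (Tlin α) - @inner ℂ _ _ α (ι (δ (rk α μ)) η) := by
      intro η
      have h := hId (rk α μ) η
      rw [rk_apply] at h
      have h2 := congrArg (fun ζ => @inner ℂ _ _ α ζ) h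
      simp only [inner_sub_right, inner_smul_right] at h2
      -- h2 : ⟪α, ι (δ (rk α μ)) η⟫ = ⟪α, Tlin (⟪μ,η⟫ • α)⟫ - ⟪α, (rk α μ) (Tlin η)⟫
      rw [map_smul] at h2
      have h3 : (rk α μ) (Tlin η) = @inner ℂ _ _ μ (Tlin η) • α := rk_apply _ _ _
      rw [h3, inner_smul_right, inner_smul_right, hαα, mul_one] at h2
      -- h2 : ⟪α, ι (δ (rk α μ)) η⟫ = ⟪μ,η⟫ * ⟪α, Tlin α⟫ - ⟪μ, Tlin η⟫
      have := congrArg (fun z => @inner ℂ _ _ μ η * @inner ℂ _ _ α (Tlin α) - z) h2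
      rw [this]
      ring
    rw [show (fun η => @inner ℂ _ _ μ (Tlin η)) = fun η =>
      @inner ℂ _ _ μ η * @inner ℂ _ _ α (Tlin α) - @inner ℂ _ _ α (ι (δ (rk α μ)) η)
      from funext hform]
    exact ((innerSL ℂ μ).continuous.mul continuous_const).sub
      ((innerSL ℂ α).continuous.comp (ι (δ (rk α μ))).continuous)
  have hTcont : Continuous Tlin := by
    apply Tlin.continuous_of_seq_closed_graph
    intro u x y hu huy
    symm
    apply ext_inner_left ℂ
    intro μ
    have h1 : Tendsto (fun m => @inner ℂ _ _ μ (Tlin (u m))) atTop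
        (𝓝 (@inner ℂ _ _ μ (Tlin x))) := ((hweak μ).tendsto x).comp hu
    have h2 : Tendsto (fun m => @inner ℂ _ _ μ (Tlin (u m))) atTop
        (𝓝 (@inner ℂ _ _ μ y)) := ((innerSL ℂ μ).continuous.tendsto y).comp huy
    exact tendsto_nhds_unique h1 h2
  set T : H →L[ℂ] H := ⟨Tlin, hTcont⟩ with hTdef
  have hT : ∀ η, T η = Tlin η := fun η => rfl
  have hIdT : ∀ x : H →L[ℂ] H, ι (δ x) = T * x - x * T := by
    intro x
    ext η
    rw [ContinuousLinearMap.sub_apply, ContinuousLinearMap.mul_apply,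
      ContinuousLinearMap.mul_apply, hT, hT]
    exact hId x η
  -- continuity of δ
  have hδcont : Continuous δ := by
    apply δ.continuous_of_seq_closed_graph
    intro u x y hu huy
    apply hinj
    have h1 : Tendsto (fun m => ι (δ (u m))) atTop (𝓝 (ι y)) := by
      have := (ιL.continuous.tendsto y).comp huy
      simpa only [Function.comp_def, hιL] using this
    have h2 : Tendsto (fun m => ι (δ (u m))) atTop (𝓝 (T * x - x * T)) := by
      have hcont : Continuous fun A : H →L[ℂ] H => T * A - A * T :=
        (continuous_const.mul continuous_id).sub (continuous_id.mul continuous_const)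
      have := (hcont.tendsto x).comp hu
      have heq : (fun m => ι (δ (u m))) = fun m => T * u m - u m * T := by
        funext m; exact hIdT (u m)
      rw [heq]
      exact this
    rw [hIdT x]
    exact tendsto_nhds_unique h1 h2
  set δL : (H →L[ℂ] H) →L[ℂ] E := ⟨δ, hδcont⟩ with hδLdef
  have hδL : ∀ x, δL x = δ x := fun x => rfl
  set Mc : ℝ := ‖δL‖ with hMcdef
  have hMc : 0 ≤ Mc := norm_nonneg _
  have hδbound : ∀ x : H →L[ℂ] H, ‖δ x‖ ≤ Mc * ‖x‖ := fun x => δL.le_opNorm x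
  -- Hilbert basis
  obtain ⟨w, bw, hbw⟩ := exists_hilbertBasis ℂ H
  have hw : Orthonormal ℂ ((↑) : w → H) := by rw [← hbw]; exact bw.orthonormal
  have hdense : Dense ((Submodule.span ℂ w : Submodule ℂ H) : Set H) := by
    have hd := bw.dense_span
    rw [hbw, Subtype.range_coe] at hd
    exact Submodule.dense_iff_topologicalClosure_eq_top.mpr hd
  by_cases hfin : w.Finite
  · -- finite-rank case : ι d = T directly
    haveI : Fintype w := hfin.fintype
    choose r hr hrn using fun b : w => hrk' (T (b : H)) (b : H)
    refine ⟨∑ b : w, r b, fun x => ?_⟩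
    have hιd : ι (∑ b : w, r b) = T := by
      have hsum : ι (∑ b : w, r b) = ∑ b : w, rk (T (b : H)) (b : H) := by
        rw [map_sum]
        exact Finset.sum_congr rfl fun b _ => hr b
      refine ContinuousLinearMap.ext_on hdense ?_
      intro ξ hξ
      rw [hsum, ContinuousLinearMap.sum_apply]
      have hite : ∀ b : w, @inner ℂ _ _ ((b : w) : H) ξ =
          if b = (⟨ξ, hξ⟩ : w) then 1 else 0 := fun b =>
        orthonormal_iff_ite.mp hw b ⟨ξ, hξ⟩
      calc ∑ b : w, rk (T (b : H)) (b : H) ξ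
          = ∑ b : w, (if b = (⟨ξ, hξ⟩ : w) then (1:ℂ) else 0) • T (b : H) := by
            refine Finset.sum_congr rfl fun b _ => ?_
            rw [rk_apply, hite b]
        _ = T ξ := by
            simp only [ite_smul, one_smul, zero_smul]
            rw [Finset.sum_ite_eq' Finset.univ (⟨ξ, hξ⟩ : w)
              (fun b => T ((b : w) : H))]
            simp
    rw [hIdT x, hιd]
  · -- infinite-dimensional case
    have hwi : w.Infinite := hfin
    set emb : ℕ ↪ w := hwi.natEmbedding with hembdef
    set f : ℕ → H := fun k => ((emb k : w) : H) with hfdef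
    have hf : Orthonormal ℂ f := hw.comp emb emb.injective
    have hbdd : ∀ k, @inner ℂ _ _ (f k) (T (f k)) ∈ Metric.closedBall (0:ℂ) ‖T‖ := by
      intro k
      rw [Metric.mem_closedBall, dist_zero_right]
      calc ‖@inner ℂ _ _ (f k) (T (f k))‖ ≤ ‖f k‖ * ‖T (f k)‖ := norm_inner_le_norm _ _
        _ ≤ ‖f k‖ * (‖T‖ * ‖f k‖) :=
            mul_le_mul_of_nonneg_left (T.le_opNorm _) (norm_nonneg _)
        _ = ‖T‖ := by rw [hf.1 k]; ring
    obtain ⟨lam, _, φm, hφmono, hφlim⟩ :=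
      tendsto_subseq_of_bounded Metric.isBounded_closedBall hbdd
    set g : ℕ → H := f ∘ φm with hgdef
    have hg : Orthonormal ℂ g := hf.comp φm hφmono.injective
    set S : H →L[ℂ] H := T - lam • 1 with hSdef
    have hTS : ∀ x : H →L[ℂ] H, T * x - x * T = S * x - x * S := by
      intro x
      rw [hSdef]
      simp only [sub_mul, mul_sub, smul_mul_assoc, mul_smul_comm, one_mul, mul_one]
      abel
    have hdiagS : Tendsto (fun k => @inner ℂ _ _ (g k) (S (g k))) atTop (𝓝 0) := by
      have h1 : ∀ k, @inner ℂ _ _ (g k) (S (g k)) =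
          @inner ℂ _ _ (g k) (T (g k)) - lam := by
        intro k
        have hgg : @inner ℂ _ _ (g k) (g k) = 1 := by
          rw [inner_self_eq_norm_sq_to_K, hg.1 k]; norm_num
        rw [hSdef]
        simp only [ContinuousLinearMap.sub_apply, ContinuousLinearMap.smul_apply,
          ContinuousLinearMap.one_apply, inner_sub_right, inner_smul_right, hgg, mul_one]
      have h2 : Tendsto (fun k => @inner ℂ _ _ (g k) (T (g k)) - lam) atTop
          (𝓝 (lam - lam)) := hφlim.sub_const lam
      rw [sub_self] at h2
      exact h2.congr fun k => (h1 k).symm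
    have hcorner : ∀ τ : ℝ, 0 < τ → ∀ m : ℕ, ∃ e : Fin m → H, Orthonormal ℂ e ∧
        ∀ i j, ‖@inner ℂ _ _ (e i) (S (e j))‖ ≤ τ :=
      fun τ hτ m => corner_small S hg hdiagS hτ m
    have hMS : ∀ x : H →L[ℂ] H, ∃ y : E, ι y = S * x - x * S ∧ ‖y‖ ≤ Mc * ‖x‖ :=
      fun x => ⟨δ x, by rw [hIdT x, hTS x], hδbound x⟩
    obtain ⟨d, hd⟩ := exists_preimage_of_corner ι hideal hrefl ιL hιL S Mc c₀ hMc hc₀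
      hMS hrk' hcorner w hw hdense
    exact ⟨d, fun x => by rw [hIdT x, hTS x, hd]⟩
end
end
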